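/- arXiv:2006.06716 — 12 statements merged into one kernel-verified Lean document; each statement's English description precedes it below -/
import Mathlib

section
/- Let (V,d) be a finite metric space, let i ≠ j be points of V, and let N(i) ⊆ V∖{i} and N(j) ⊆ V∖{j} be nonempty finite 'neighbor' sets. Let 0 < t < 1. Then W(D_{t,i}, D_{t,j}) ≥ d(i,j) − t·(c_i/d_i + c_j/d_j); equivalently, 1 − W(D_{t,i},D_{t,j})/d(i,j) ≤ (t/d(i,j))·(c_i/d_i + c_j/d_j). -/
open Finset

/-- `A` is a coupling of the probability distributions `μ` and `ν`. -/
def IsCoupling {V : Type*} [Fintype V] (μ ν : V → ℝ) (A : V → V → ℝ) : Prop :=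
  (∀ u v, 0 ≤ A u v) ∧ (∀ u, ∑ v, A u v = μ u) ∧ (∀ v, ∑ u, A u v = ν v)

/-- The Wasserstein (transportation) cost between two probability distributions on a
finite metric space: the infimum (= minimum) over all couplings of the transport cost. -/
noncomputable def Wcost {V : Type*} [Fintype V] [MetricSpace V] (μ ν : V → ℝ) : ℝ :=
  sInf {c : ℝ | ∃ A : V → V → ℝ, IsCoupling μ ν A ∧ c = ∑ u, ∑ v, A u v * dist u v}

/-- `dd N i = Σ_{k ∈ N} d(i,k)^{-2}`. -/
noncomputable def dd {V : Type*} [MetricSpace V] (N : Finset V) (i : V) : ℝ :=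
  ∑ k ∈ N, ((dist i k)⁻¹) ^ 2

/-- `cc N i = Σ_{k ∈ N} d(i,k)^{-1}`. -/
noncomputable def cc {V : Type*} [MetricSpace V] (N : Finset V) (i : V) : ℝ :=
  ∑ k ∈ N, (dist i k)⁻¹

/-- The probability distribution `D_{t,i}` concentrated at `i` with mass `t` spread on the
neighbor set `N`. -/
noncomputable def Dprob {V : Type*} [MetricSpace V] [DecidableEq V]
    (N : Finset V) (t : ℝ) (i : V) : V → ℝ := fun v =>
  if v = i then 1 - t else if v ∈ N then t * ((dist i v)⁻¹) ^ 2 / dd N i else 0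

section Helpers

variable {V : Type*} [MetricSpace V] [DecidableEq V]

lemma dd_pos (N : Finset V) (i : V) (hN : N.Nonempty) (hi : i ∉ N) : 0 < dd N i := by
  apply Finset.sum_pos _ hN
  intro k hk
  have hd : 0 < dist i k := dist_pos.mpr (fun h => hi (h ▸ hk))
  positivity

lemma Dprob_nonneg (N : Finset V) (i : V) (hN : N.Nonempty) (hi : i ∉ N)
    (t : ℝ) (ht0 : 0 < t) (ht1 : t < 1) (v : V) : 0 ≤ Dprob N t i v := by
  have hdd := dd_pos N i hN hi
  unfold Dprob
  split_ifs with h1 h2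
  · linarith
  · have hd : 0 < dist i v := dist_pos.mpr (fun h => hi (h ▸ h2))
    positivity
  · exact le_refl 0

lemma Dprob_sum [Fintype V] (N : Finset V) (i : V) (hN : N.Nonempty) (hi : i ∉ N)
    (t : ℝ) : ∑ u, Dprob N t i u = 1 := by
  have hdd := (dd_pos N i hN hi).ne'
  have h0 : ∀ x ∈ Finset.univ, x ∉ insert i N → Dprob N t i x = 0 := by
    intro x _ hx
    simp only [Finset.mem_insert, not_or] at hx
    simp [Dprob, hx.1, hx.2]
  rw [← Finset.sum_subset (Finset.subset_univ (insert i N)) h0,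
    Finset.sum_insert hi]
  have hterm : ∀ k ∈ N, Dprob N t i k = t * ((dist i k)⁻¹) ^ 2 / dd N i := by
    intro k hk
    have hki : k ≠ i := fun h => hi (h ▸ hk)
    simp [Dprob, hki, hk]
  rw [Finset.sum_congr rfl hterm]
  simp only [Dprob, if_pos rfl]
  have : ∑ k ∈ N, t * ((dist i k)⁻¹) ^ 2 / dd N i = t * dd N i / dd N i := by
    rw [← Finset.sum_div, ← Finset.mul_sum]; rfl
  rw [this, if_true, mul_div_assoc, div_self hdd]
  ring

lemma Dprob_sum_dist [Fintype V] (N : Finset V) (i : V) (hN : N.Nonempty) (hi : i ∉ N)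
    (t : ℝ) : ∑ u, Dprob N t i u * dist i u = t * (cc N i / dd N i) := by
  have hdd := (dd_pos N i hN hi).ne'
  have h0 : ∀ x ∈ Finset.univ, x ∉ insert i N → Dprob N t i x * dist i x = 0 := by
    intro x _ hx
    simp only [Finset.mem_insert, not_or] at hx
    simp [Dprob, hx.1, hx.2]
  rw [← Finset.sum_subset (Finset.subset_univ (insert i N)) h0,
    Finset.sum_insert hi]
  have hterm : ∀ k ∈ N, Dprob N t i k * dist i k = t * (dist i k)⁻¹ / dd N i := by
    intro k hk
    have hki : k ≠ i := fun h => hi (h ▸ hk)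
    have hd : dist i k ≠ 0 := by
      have : i ≠ k := by rintro rfl; exact hi hk
      exact (dist_pos.mpr this).ne'
    simp only [Dprob, if_neg hki, if_pos hk]
    field_simp
  rw [Finset.sum_congr rfl hterm]
  simp only [Dprob, if_pos rfl, dist_self, mul_zero, zero_add]
  simp [cc, Finset.sum_div, Finset.mul_sum, mul_div_assoc]

end Helpers

theorem wasserstein_lower_bound {V : Type*} [Fintype V] [MetricSpace V] [DecidableEq V]
    (i j : V) (hij : i ≠ j)
    (Ni Nj : Finset V) (hNi : Ni.Nonempty) (hNj : Nj.Nonempty)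
    (hNi' : i ∉ Ni) (hNj' : j ∉ Nj)
    (t : ℝ) (ht0 : 0 < t) (ht1 : t < 1) :
    Wcost (Dprob Ni t i) (Dprob Nj t j) ≥
      dist i j - t * (cc Ni i / dd Ni i + cc Nj j / dd Nj j) := by

  set μ := Dprob Ni t i with hμ
  set ν := Dprob Nj t j with hν
  have hμnn := Dprob_nonneg Ni i hNi hNi' t ht0 ht1
  have hνnn := Dprob_nonneg Nj j hNj hNj' t ht0 ht1
  have hμsum : ∑ u, μ u = 1 := Dprob_sum Ni i hNi hNi' t
  have hνsum : ∑ v, ν v = 1 := Dprob_sum Nj j hNj hNj' t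
  have hμd : ∑ u, μ u * dist i u = t * (cc Ni i / dd Ni i) :=
    Dprob_sum_dist Ni i hNi hNi' t
  have hνd : ∑ v, ν v * dist j v = t * (cc Nj j / dd Nj j) :=
    Dprob_sum_dist Nj j hNj hNj' t
  apply le_csInf
  · refine ⟨∑ u, ∑ v, (fun u v => μ u * ν v) u v * dist u v,
      fun u v => μ u * ν v, ⟨fun u v => mul_nonneg (hμnn u) (hνnn v), ?_, ?_⟩, rfl⟩
    · intro u; rw [← Finset.mul_sum, hνsum, mul_one]
    · intro v; rw [← Finset.sum_mul, hμsum, one_mul]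
  · rintro c ⟨A, ⟨hA0, hA1, hA2⟩, rfl⟩
    have key : ∑ u, ∑ v, A u v * (dist i j - dist i u - dist j v)
        ≤ ∑ u, ∑ v, A u v * dist u v := by
      apply Finset.sum_le_sum; intro u _
      apply Finset.sum_le_sum; intro v _
      apply mul_le_mul_of_nonneg_left _ (hA0 u v)
      have h4 := dist_triangle4 i u v j
      have := dist_comm j v
      linarith
    have e1 : ∑ u, ∑ v, A u v * (dist i j - dist i u - dist j v)
        = dist i j - t * (cc Ni i / dd Ni i) - t * (cc Nj j / dd Nj j) := by
      have expand : ∀ u, ∑ v, A u v * (dist i j - dist i u - dist j v)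
          = (∑ v, A u v) * (dist i j - dist i u) - ∑ v, A u v * dist j v := by
        intro u
        rw [Finset.sum_mul, ← Finset.sum_sub_distrib]
        congr 1; ext v; ring
      simp only [expand, hA1]
      rw [Finset.sum_sub_distrib]
      have e2 : ∑ u, μ u * (dist i j - dist i u)
          = dist i j - t * (cc Ni i / dd Ni i) := by
        have : ∑ u, μ u * (dist i j - dist i u)
            = (∑ u, μ u) * dist i j - ∑ u, μ u * dist i u := by
          rw [Finset.sum_mul, ← Finset.sum_sub_distrib]
          congr 1; ext u; ring
        rw [this, hμsum, hμd, one_mul]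
      have e3 : ∑ u, ∑ v, A u v * dist j v = t * (cc Nj j / dd Nj j) := by
        rw [Finset.sum_comm, ← hνd]
        congr 1; ext v
        rw [← Finset.sum_mul, hA2]
      rw [e2, e3]
    calc dist i j - t * (cc Ni i / dd Ni i + cc Nj j / dd Nj j)
        = ∑ u, ∑ v, A u v * (dist i j - dist i u - dist j v) := by rw [e1]; ring
      _ ≤ ∑ u, ∑ v, A u v * dist u v := key
end

section
/- Let G be a locally finite graph with positive symmetric edge weights ℓ, and let {i,j} be an edge at which the tree equation of motion holds. Suppose that the lengths of the edge {i,j} and of all edges adjacent to it (i.e., all other edges incident to i or to j) are not all equal. Then there exists an edge adjacent to {i,j} whose length is strictly greater than ℓ(i,j), and there exists an edge adjacent to {i,j} whose length is strictly less than ℓ(i,j); in particular {i,j} is neither of maximum nor of minimum length among itself and its adjacent edges. -/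
open Finset

/-- `cv G ℓ i = Σ_{k ∼ i} 1/ℓ(i,k)`. -/
noncomputable def cv {V : Type*} (G : SimpleGraph V) [G.LocallyFinite]
    (ℓ : V → V → ℝ) (i : V) : ℝ :=
  ∑ k ∈ G.neighborFinset i, (ℓ i k)⁻¹

/-- `dv G ℓ i = Σ_{k ∼ i} 1/ℓ(i,k)²`. -/
noncomputable def dv {V : Type*} (G : SimpleGraph V) [G.LocallyFinite]
    (ℓ : V → V → ℝ) (i : V) : ℝ :=
  ∑ k ∈ G.neighborFinset i, ((ℓ i k)⁻¹) ^ 2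

/-- The tree equation of motion at the edge `{i,j}`:
`(1/ℓ(i,j))·(c_i²/d_i² + c_j²/d_j²) − c_i/d_i − c_j/d_j = 0`. -/
def tEoM {V : Type*} (G : SimpleGraph V) [G.LocallyFinite]
    (ℓ : V → V → ℝ) (i j : V) : Prop :=
  (ℓ i j)⁻¹ * ((cv G ℓ i / dv G ℓ i) ^ 2 + (cv G ℓ j / dv G ℓ j) ^ 2)
    - cv G ℓ i / dv G ℓ i - cv G ℓ j / dv G ℓ j = 0


/-!
Write `m_u = c_u / d_u`; it is the mean of the lengths of the edges at `u`, weighted by `ℓ⁻²`.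
With `x = ℓ(i,j)` the equation of motion reads `m_i² + m_j² = x (m_i + m_j)`, so `x` is the
contraharmonic mean of `m_i` and `m_j`: it lies strictly between them, or equals both.
An edge length differing from `m_u` forces lengths on both sides of `m_u` at `u`,
so in either case the lengths next to `{i,j}` spread strictly around `x`.
-/

section WeightedMean

variable {R ι : Type*} [Ring R] [LinearOrder R] [IsStrictOrderedRing R]
  {s : Finset ι} {w v : ι → R} {a : R} {k₀ : ι}

theorem exists_gt_of_sum_mul_sub_eq_zero (hw : ∀ k ∈ s, 0 < w k)
    (hsum : ∑ k ∈ s, w k * (v k - a) = 0) (hk₀ : k₀ ∈ s) (hne : v k₀ ≠ a) :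
    ∃ k ∈ s, a < v k := by
  by_contra! hle
  have hlt : ∑ k ∈ s, w k * (v k - a) < ∑ k ∈ s, 0 :=
    Finset.sum_lt_sum
      (fun k hk => mul_nonpos_of_nonneg_of_nonpos (hw k hk).le (sub_nonpos.2 (hle k hk)))
      ⟨k₀, hk₀, mul_neg_of_pos_of_neg (hw k₀ hk₀) (sub_neg.2 ((hle k₀ hk₀).lt_of_ne hne))⟩
  simp [hsum] at hlt

theorem exists_lt_of_sum_mul_sub_eq_zero (hw : ∀ k ∈ s, 0 < w k)
    (hsum : ∑ k ∈ s, w k * (v k - a) = 0) (hk₀ : k₀ ∈ s) (hne : v k₀ ≠ a) :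
    ∃ k ∈ s, v k < a := by
  have hsum' : ∑ k ∈ s, w k * (-v k - -a) = 0 := by
    simp only [neg_sub_neg, ← neg_sub (v _), mul_neg, Finset.sum_neg_distrib, hsum, neg_zero]
  simpa using exists_gt_of_sum_mul_sub_eq_zero hw hsum' hk₀ (fun h => hne (neg_inj.1 h))

end WeightedMean

theorem lt_and_lt_of_sq_add_sq_eq_mul_add {a b x : ℝ} (ha : 0 < a) (hb : 0 < b)
    (h : a ^ 2 + b ^ 2 = x * (a + b)) (hab : a < b) : a < x ∧ x < b := by
  constructor <;> nlinarith

namespace SimpleGraph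

variable {V : Type*} (G : SimpleGraph V) [G.LocallyFinite] (ℓ : V → V → ℝ)

noncomputable def meanLength (u : V) : ℝ :=
  cv G ℓ u / dv G ℓ u

variable {G ℓ}

theorem tEoM_iff_sq_add_sq {i j : V} (hx : ℓ i j ≠ 0) :
    tEoM G ℓ i j ↔
      meanLength G ℓ i ^ 2 + meanLength G ℓ j ^ 2 =
        ℓ i j * (meanLength G ℓ i + meanLength G ℓ j) := by
  rw [tEoM, ← meanLength, ← meanLength]
  constructor <;> intro h <;> field_simp at h ⊢ <;> linarith

variable (hpos : ∀ u v, G.Adj u v → 0 < ℓ u v) {u w : V}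
include hpos

theorem dv_pos (huw : G.Adj u w) : 0 < dv G ℓ u :=
  Finset.sum_pos (fun k hk => by have := hpos u k ((G.mem_neighborFinset u k).1 hk); positivity)
    ⟨w, (G.mem_neighborFinset u w).2 huw⟩

theorem cv_pos (huw : G.Adj u w) : 0 < cv G ℓ u :=
  Finset.sum_pos (fun k hk => inv_pos.2 (hpos u k ((G.mem_neighborFinset u k).1 hk)))
    ⟨w, (G.mem_neighborFinset u w).2 huw⟩

theorem meanLength_pos (huw : G.Adj u w) : 0 < meanLength G ℓ u :=
  div_pos (cv_pos hpos huw) (dv_pos hpos huw)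

theorem sum_inv_sq_mul_sub_meanLength (huw : G.Adj u w) :
    ∑ k ∈ G.neighborFinset u, (ℓ u k)⁻¹ ^ 2 * (ℓ u k - meanLength G ℓ u) = 0 := by
  have hd := (dv_pos hpos huw).ne'
  calc ∑ k ∈ G.neighborFinset u, (ℓ u k)⁻¹ ^ 2 * (ℓ u k - meanLength G ℓ u)
      = cv G ℓ u - meanLength G ℓ u * dv G ℓ u := by
        rw [cv, dv, Finset.mul_sum, ← Finset.sum_sub_distrib]
        refine Finset.sum_congr rfl fun k hk => ?_
        have := (hpos u k ((G.mem_neighborFinset u k).1 hk)).ne'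
        field_simp
    _ = 0 := by rw [meanLength, div_mul_cancel₀ _ hd, sub_self]

theorem exists_adj_meanLength_lt_and_exists_adj_lt_meanLength
    (hne : ∃ k, G.Adj u k ∧ ℓ u k ≠ meanLength G ℓ u) :
    (∃ k, G.Adj u k ∧ meanLength G ℓ u < ℓ u k) ∧
      (∃ k, G.Adj u k ∧ ℓ u k < meanLength G ℓ u) := by
  obtain ⟨k₀, hk₀, hk₀ne⟩ := hne
  have hw : ∀ k ∈ G.neighborFinset u, 0 < (ℓ u k)⁻¹ ^ 2 := fun k hk => by
    have := hpos u k ((G.mem_neighborFinset u k).1 hk); positivity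
  have hsum := sum_inv_sq_mul_sub_meanLength hpos hk₀
  have hmem := (G.mem_neighborFinset u k₀).2 hk₀
  obtain ⟨k₁, hk₁, hgt⟩ := exists_gt_of_sum_mul_sub_eq_zero hw hsum hmem hk₀ne
  obtain ⟨k₂, hk₂, hlt⟩ := exists_lt_of_sum_mul_sub_eq_zero hw hsum hmem hk₀ne
  exact ⟨⟨k₁, (G.mem_neighborFinset u k₁).1 hk₁, hgt⟩, ⟨k₂, (G.mem_neighborFinset u k₂).1 hk₂, hlt⟩⟩

theorem exists_adj_ne_lt_of_le_meanLength (hle : ℓ u w ≤ meanLength G ℓ u)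
    (hne : ∃ k, G.Adj u k ∧ ℓ u k ≠ meanLength G ℓ u) :
    ∃ k, G.Adj u k ∧ k ≠ w ∧ ℓ u w < ℓ u k := by
  obtain ⟨k, hk, hgt⟩ := (exists_adj_meanLength_lt_and_exists_adj_lt_meanLength hpos hne).1
  exact ⟨k, hk, by rintro rfl; linarith, hle.trans_lt hgt⟩

theorem exists_adj_ne_lt_of_meanLength_le (hle : meanLength G ℓ u ≤ ℓ u w)
    (hne : ∃ k, G.Adj u k ∧ ℓ u k ≠ meanLength G ℓ u) :
    ∃ k, G.Adj u k ∧ k ≠ w ∧ ℓ u k < ℓ u w := by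
  obtain ⟨k, hk, hlt⟩ := (exists_adj_meanLength_lt_and_exists_adj_lt_meanLength hpos hne).2
  exact ⟨k, hk, by rintro rfl; linarith, hlt.trans_le hle⟩

end SimpleGraph

open SimpleGraph in
theorem eom_edge_not_extremal {V : Type*} (G : SimpleGraph V) [G.LocallyFinite]
    (ℓ : V → V → ℝ) (hsymm : ∀ u v, ℓ u v = ℓ v u)
    (hpos : ∀ u v, G.Adj u v → 0 < ℓ u v)
    (i j : V) (hadj : G.Adj i j)
    (heom : tEoM G ℓ i j)
    (hne : ¬ ((∀ k, G.Adj i k → ℓ i k = ℓ i j) ∧ (∀ k, G.Adj j k → ℓ j k = ℓ i j))) :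
    (∃ k, (G.Adj i k ∧ k ≠ j ∧ ℓ i j < ℓ i k) ∨ (G.Adj j k ∧ k ≠ i ∧ ℓ i j < ℓ j k)) ∧
    (∃ k, (G.Adj i k ∧ k ≠ j ∧ ℓ i k < ℓ i j) ∨ (G.Adj j k ∧ k ≠ i ∧ ℓ j k < ℓ i j)) := by
  have hji : ℓ j i = ℓ i j := hsymm j i
  have ha := meanLength_pos hpos hadj
  have hb := meanLength_pos hpos hadj.symm
  have key := (tEoM_iff_sq_add_sq (hpos i j hadj).ne').1 heom
  rcases lt_trichotomy (meanLength G ℓ i) (meanLength G ℓ j) with hab | hab | hab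
  · obtain ⟨hia, hjb⟩ := lt_and_lt_of_sq_add_sq_eq_mul_add ha hb key hab
    refine ⟨?_, (exists_adj_ne_lt_of_meanLength_le hpos hia.le ⟨j, hadj, hia.ne'⟩).imp
      fun _ => Or.inl⟩
    rw [← hji] at hjb ⊢
    exact (exists_adj_ne_lt_of_le_meanLength hpos hjb.le ⟨i, hadj.symm, hjb.ne⟩).imp
      fun _ => Or.inr
  · have hx : ℓ i j = meanLength G ℓ i := by rw [← hab] at key; nlinarith
    rw [not_and_or] at hne
    push Not at hne
    rcases hne with ⟨k₀, hk₀, hk₀ne⟩ | ⟨k₀, hk₀, hk₀ne⟩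
    · have hnc : ∃ k, G.Adj i k ∧ ℓ i k ≠ meanLength G ℓ i := ⟨k₀, hk₀, hx ▸ hk₀ne⟩
      exact ⟨(exists_adj_ne_lt_of_le_meanLength hpos hx.le hnc).imp fun _ => Or.inl,
        (exists_adj_ne_lt_of_meanLength_le hpos hx.ge hnc).imp fun _ => Or.inl⟩
    · rw [← hji, hab] at hx
      rw [← hji] at hk₀ne ⊢
      have hnc : ∃ k, G.Adj j k ∧ ℓ j k ≠ meanLength G ℓ j := ⟨k₀, hk₀, hx ▸ hk₀ne⟩
      exact ⟨(exists_adj_ne_lt_of_le_meanLength hpos hx.le hnc).imp fun _ => Or.inr,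
        (exists_adj_ne_lt_of_meanLength_le hpos hx.ge hnc).imp fun _ => Or.inr⟩
  · obtain ⟨hjb, hia⟩ :=
      lt_and_lt_of_sq_add_sq_eq_mul_add (x := ℓ i j) hb ha (by linear_combination key) hab
    refine ⟨(exists_adj_ne_lt_of_le_meanLength hpos hia.le ⟨j, hadj, hia.ne⟩).imp
      fun _ => Or.inl, ?_⟩
    rw [← hji] at hjb ⊢
    exact (exists_adj_ne_lt_of_meanLength_le hpos hjb.le ⟨i, hadj.symm, hjb.ne'⟩).imp
      fun _ => Or.inr
end

section
/- Let G be an infinite tree in which every vertex has degree q+1 for some q ≥ 1, equipped with positive symmetric edge weights ℓ. Let Σ be a finite connected set of vertices, let V(∂Σ) be the set of vertices of Σ having at least one neighbor outside Σ, let E(Σ) be the set of edges of G with both endpoints in Σ, and let E(∂Σ) be the set of edges having either both endpoints in V(∂Σ), or one endpoint in V(∂Σ) and the other outside Σ. Suppose there is a constant c > 0 with ℓ(e) = c for every e ∈ E(∂Σ), and suppose the tree equation of motion holds at every edge of E(Σ). Then ℓ(e) = c for every edge e ∈ E(Σ). -/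
open Finset

section Aux

variable {V : Type*} (G : SimpleGraph V) [G.LocallyFinite]

lemma dv_pos' (ℓ : V → V → ℝ) (hpos : ∀ u v, G.Adj u v → 0 < ℓ u v) {v : V}
    (h : (G.neighborFinset v).Nonempty) : 0 < dv G ℓ v := by
  apply Finset.sum_pos _ h
  intro k hk
  have hl := hpos v k ((SimpleGraph.mem_neighborFinset G v k).mp hk)
  exact pow_pos (inv_pos.mpr hl) 2

lemma cv_pos' (ℓ : V → V → ℝ) (hpos : ∀ u v, G.Adj u v → 0 < ℓ u v) {v : V}
    (h : (G.neighborFinset v).Nonempty) : 0 < cv G ℓ v := by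
  apply Finset.sum_pos _ h
  intro k hk
  exact inv_pos.mpr (hpos v k ((SimpleGraph.mem_neighborFinset G v k).mp hk))

lemma x_le' (ℓ : V → V → ℝ) (hpos : ∀ u v, G.Adj u v → 0 < ℓ u v) {v : V} {M : ℝ}
    (h : (G.neighborFinset v).Nonempty) (hb : ∀ k, G.Adj v k → ℓ v k ≤ M) :
    cv G ℓ v / dv G ℓ v ≤ M := by
  rw [div_le_iff₀ (dv_pos' G ℓ hpos h)]
  unfold cv dv
  rw [Finset.mul_sum]
  apply Finset.sum_le_sum
  intro k hk
  have hadj := (SimpleGraph.mem_neighborFinset G v k).mp hk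
  have hl := hpos v k hadj
  have e : (ℓ v k)⁻¹ = ℓ v k * ((ℓ v k)⁻¹) ^ 2 := by field_simp
  conv_lhs => rw [e]
  exact mul_le_mul_of_nonneg_right (hb k hadj) (sq_nonneg _)

lemma x_ge' (ℓ : V → V → ℝ) (hpos : ∀ u v, G.Adj u v → 0 < ℓ u v) {v : V} {M : ℝ}
    (h : (G.neighborFinset v).Nonempty) (hb : ∀ k, G.Adj v k → M ≤ ℓ v k) :
    M ≤ cv G ℓ v / dv G ℓ v := by
  rw [le_div_iff₀ (dv_pos' G ℓ hpos h)]
  unfold cv dv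
  rw [Finset.mul_sum]
  apply Finset.sum_le_sum
  intro k hk
  have hadj := (SimpleGraph.mem_neighborFinset G v k).mp hk
  have hl := hpos v k hadj
  have e : (ℓ v k)⁻¹ = ℓ v k * ((ℓ v k)⁻¹) ^ 2 := by field_simp
  calc M * ((ℓ v k)⁻¹) ^ 2
      ≤ ℓ v k * ((ℓ v k)⁻¹) ^ 2 := mul_le_mul_of_nonneg_right (hb k hadj) (sq_nonneg _)
    _ = (ℓ v k)⁻¹ := e.symm

lemma all_eq_max' (ℓ : V → V → ℝ) (hpos : ∀ u v, G.Adj u v → 0 < ℓ u v) {v : V} {M : ℝ}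
    (h : (G.neighborFinset v).Nonempty) (hb : ∀ k, G.Adj v k → ℓ v k ≤ M)
    (hx : cv G ℓ v / dv G ℓ v = M) : ∀ k, G.Adj v k → ℓ v k = M := by
  have hd := dv_pos' G ℓ hpos h
  have hcv : cv G ℓ v = M * dv G ℓ v := by
    rw [div_eq_iff hd.ne'] at hx; linarith
  have hsum : ∑ k ∈ G.neighborFinset v, (M * ((ℓ v k)⁻¹) ^ 2 - (ℓ v k)⁻¹) = 0 := by
    rw [Finset.sum_sub_distrib, ← Finset.mul_sum]
    unfold cv dv at hcv
    linarith
  have hterm : ∀ k ∈ G.neighborFinset v, 0 ≤ M * ((ℓ v k)⁻¹) ^ 2 - (ℓ v k)⁻¹ := by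
    intro k hk
    have hadj := (SimpleGraph.mem_neighborFinset G v k).mp hk
    have hl := hpos v k hadj
    have e : (ℓ v k)⁻¹ = ℓ v k * ((ℓ v k)⁻¹) ^ 2 := by field_simp
    nlinarith [mul_le_mul_of_nonneg_right (hb k hadj) (sq_nonneg ((ℓ v k)⁻¹))]
  intro k hadj
  have hk := (SimpleGraph.mem_neighborFinset G v k).mpr hadj
  have hzero := (Finset.sum_eq_zero_iff_of_nonneg hterm).mp hsum k hk
  have hl := hpos v k hadj
  have e : (ℓ v k)⁻¹ = ℓ v k * ((ℓ v k)⁻¹) ^ 2 := by field_simp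
  have h2 : ℓ v k * ((ℓ v k)⁻¹) ^ 2 = M * ((ℓ v k)⁻¹) ^ 2 := by linarith
  exact mul_right_cancel₀ (pow_ne_zero 2 (inv_ne_zero hl.ne')) h2

lemma all_eq_min' (ℓ : V → V → ℝ) (hpos : ∀ u v, G.Adj u v → 0 < ℓ u v) {v : V} {M : ℝ}
    (h : (G.neighborFinset v).Nonempty) (hb : ∀ k, G.Adj v k → M ≤ ℓ v k)
    (hx : cv G ℓ v / dv G ℓ v = M) : ∀ k, G.Adj v k → ℓ v k = M := by
  have hd := dv_pos' G ℓ hpos h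
  have hcv : cv G ℓ v = M * dv G ℓ v := by
    rw [div_eq_iff hd.ne'] at hx; linarith
  have hsum : ∑ k ∈ G.neighborFinset v, ((ℓ v k)⁻¹ - M * ((ℓ v k)⁻¹) ^ 2) = 0 := by
    rw [Finset.sum_sub_distrib, ← Finset.mul_sum]
    unfold cv dv at hcv
    linarith
  have hterm : ∀ k ∈ G.neighborFinset v, 0 ≤ (ℓ v k)⁻¹ - M * ((ℓ v k)⁻¹) ^ 2 := by
    intro k hk
    have hadj := (SimpleGraph.mem_neighborFinset G v k).mp hk
    have hl := hpos v k hadj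
    have e : (ℓ v k)⁻¹ = ℓ v k * ((ℓ v k)⁻¹) ^ 2 := by field_simp
    nlinarith [mul_le_mul_of_nonneg_right (hb k hadj) (sq_nonneg ((ℓ v k)⁻¹))]
  intro k hadj
  have hk := (SimpleGraph.mem_neighborFinset G v k).mpr hadj
  have hzero := (Finset.sum_eq_zero_iff_of_nonneg hterm).mp hsum k hk
  have hl := hpos v k hadj
  have e : (ℓ v k)⁻¹ = ℓ v k * ((ℓ v k)⁻¹) ^ 2 := by field_simp
  have h2 : ℓ v k * ((ℓ v k)⁻¹) ^ 2 = M * ((ℓ v k)⁻¹) ^ 2 := by linarith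
  exact mul_right_cancel₀ (pow_ne_zero 2 (inv_ne_zero hl.ne')) h2

end Aux

lemma eq_of_sq_max {x y M : ℝ} (hx : 0 < x) (hy : 0 < y)
    (h : x ^ 2 + y ^ 2 = M * (x + y)) (hxM : x ≤ M) (hyM : y ≤ M) : x = M ∧ y = M := by
  constructor <;>
    nlinarith [mul_nonneg hx.le (sub_nonneg.mpr hxM), mul_nonneg hy.le (sub_nonneg.mpr hyM)]

lemma eq_of_sq_min {x y M : ℝ} (hx : 0 < x) (hy : 0 < y)
    (h : x ^ 2 + y ^ 2 = M * (x + y)) (hxM : M ≤ x) (hyM : M ≤ y) : x = M ∧ y = M := by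
  constructor <;>
    nlinarith [mul_nonneg hx.le (sub_nonneg.mpr hxM), mul_nonneg hy.le (sub_nonneg.mpr hyM)]

lemma eom_eq {x y M : ℝ} (hM : 0 < M) (h : M⁻¹ * (x ^ 2 + y ^ 2) - x - y = 0) :
    x ^ 2 + y ^ 2 = M * (x + y) := by
  field_simp at h
  linarith

lemma max_key {V : Type*} (G : SimpleGraph V) [G.LocallyFinite] [Infinite V]
    (hpre : G.Preconnected) (hdeg : ∀ v, (G.neighborFinset v).Nonempty)
    (ℓ : V → V → ℝ) (hpos : ∀ u v, G.Adj u v → 0 < ℓ u v)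
    (S : Finset V) (c : ℝ) (hc : 0 < c)
    (hbdy : ∀ i j, G.Adj i j → i ∈ S → j ∉ S → ℓ i j = c)
    (heom : ∀ i j, G.Adj i j → i ∈ S → j ∈ S → tEoM G ℓ i j)
    (M : ℝ) (hMc : c < M)
    (hbound : ∀ v ∈ S, ∀ k, G.Adj v k → ℓ v k ≤ M)
    (v₀ k₀ : V) (hadj0 : G.Adj v₀ k₀) (h0 : v₀ ∈ S) (hval : ℓ v₀ k₀ = M) : False := by
  have hM : 0 < M := hc.trans hMc
  have estep : ∀ v k, G.Adj v k → v ∈ S → ℓ v k = M →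
      k ∈ S ∧ (∀ m, G.Adj v m → ℓ v m = M) ∧ (∀ m, G.Adj k m → ℓ k m = M) := by
    intro v k hadj hvS hvk
    have hkS : k ∈ S := by
      by_contra hkS
      have := hbdy v k hadj hvS hkS
      rw [hvk] at this; linarith
    have he := heom v k hadj hvS hkS
    unfold tEoM at he
    rw [hvk] at he
    have hxpos : 0 < cv G ℓ v / dv G ℓ v :=
      div_pos (cv_pos' G ℓ hpos (hdeg v)) (dv_pos' G ℓ hpos (hdeg v))
    have hypos : 0 < cv G ℓ k / dv G ℓ k :=
      div_pos (cv_pos' G ℓ hpos (hdeg k)) (dv_pos' G ℓ hpos (hdeg k))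
    have hxM : cv G ℓ v / dv G ℓ v ≤ M :=
      x_le' G ℓ hpos (hdeg v) (fun m hm => hbound v hvS m hm)
    have hyM : cv G ℓ k / dv G ℓ k ≤ M :=
      x_le' G ℓ hpos (hdeg k) (fun m hm => hbound k hkS m hm)
    have heq := eom_eq hM he
    obtain ⟨hx, hy⟩ := eq_of_sq_max hxpos hypos heq hxM hyM
    exact ⟨hkS,
      all_eq_max' G ℓ hpos (hdeg v) (fun m hm => hbound v hvS m hm) hx,
      all_eq_max' G ℓ hpos (hdeg k) (fun m hm => hbound k hkS m hm) hy⟩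
  have h00 := estep v₀ k₀ hadj0 h0 hval
  have hstep : ∀ a b, G.Adj a b → (a ∈ S ∧ ∀ m, G.Adj a m → ℓ a m = M) →
      (b ∈ S ∧ ∀ m, G.Adj b m → ℓ b m = M) := by
    rintro a b hab ⟨haS, hall⟩
    obtain ⟨hbS, -, hb⟩ := estep a b hab haS (hall b hab)
    exact ⟨hbS, hb⟩
  have key : ∀ {a b : V} (_ : G.Walk a b),
      (a ∈ S ∧ ∀ m, G.Adj a m → ℓ a m = M) → (b ∈ S ∧ ∀ m, G.Adj b m → ℓ b m = M) := by
    intro a b w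
    induction w with
    | nil => exact id
    | cons h p ih => intro ha; exact ih (hstep _ _ h ha)
  obtain ⟨v, hv⟩ := Infinite.exists_notMem_finset S
  obtain ⟨w⟩ := hpre v₀ v
  exact hv (key w ⟨h0, h00.2.1⟩).1

lemma min_key {V : Type*} (G : SimpleGraph V) [G.LocallyFinite] [Infinite V]
    (hpre : G.Preconnected) (hdeg : ∀ v, (G.neighborFinset v).Nonempty)
    (ℓ : V → V → ℝ) (hpos : ∀ u v, G.Adj u v → 0 < ℓ u v)
    (S : Finset V) (c : ℝ) (hc : 0 < c)
    (hbdy : ∀ i j, G.Adj i j → i ∈ S → j ∉ S → ℓ i j = c)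
    (heom : ∀ i j, G.Adj i j → i ∈ S → j ∈ S → tEoM G ℓ i j)
    (M : ℝ) (hMc : M < c) (hM : 0 < M)
    (hbound : ∀ v ∈ S, ∀ k, G.Adj v k → M ≤ ℓ v k)
    (v₀ k₀ : V) (hadj0 : G.Adj v₀ k₀) (h0 : v₀ ∈ S) (hval : ℓ v₀ k₀ = M) : False := by
  have estep : ∀ v k, G.Adj v k → v ∈ S → ℓ v k = M →
      k ∈ S ∧ (∀ m, G.Adj v m → ℓ v m = M) ∧ (∀ m, G.Adj k m → ℓ k m = M) := by
    intro v k hadj hvS hvk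
    have hkS : k ∈ S := by
      by_contra hkS
      have := hbdy v k hadj hvS hkS
      rw [hvk] at this; linarith
    have he := heom v k hadj hvS hkS
    unfold tEoM at he
    rw [hvk] at he
    have hxpos : 0 < cv G ℓ v / dv G ℓ v :=
      div_pos (cv_pos' G ℓ hpos (hdeg v)) (dv_pos' G ℓ hpos (hdeg v))
    have hypos : 0 < cv G ℓ k / dv G ℓ k :=
      div_pos (cv_pos' G ℓ hpos (hdeg k)) (dv_pos' G ℓ hpos (hdeg k))
    have hxM : M ≤ cv G ℓ v / dv G ℓ v :=
      x_ge' G ℓ hpos (hdeg v) (fun m hm => hbound v hvS m hm)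
    have hyM : M ≤ cv G ℓ k / dv G ℓ k :=
      x_ge' G ℓ hpos (hdeg k) (fun m hm => hbound k hkS m hm)
    have heq := eom_eq hM he
    obtain ⟨hx, hy⟩ := eq_of_sq_min hxpos hypos heq hxM hyM
    exact ⟨hkS,
      all_eq_min' G ℓ hpos (hdeg v) (fun m hm => hbound v hvS m hm) hx,
      all_eq_min' G ℓ hpos (hdeg k) (fun m hm => hbound k hkS m hm) hy⟩
  have h00 := estep v₀ k₀ hadj0 h0 hval
  have hstep : ∀ a b, G.Adj a b → (a ∈ S ∧ ∀ m, G.Adj a m → ℓ a m = M) →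
      (b ∈ S ∧ ∀ m, G.Adj b m → ℓ b m = M) := by
    rintro a b hab ⟨haS, hall⟩
    obtain ⟨hbS, -, hb⟩ := estep a b hab haS (hall b hab)
    exact ⟨hbS, hb⟩
  have key : ∀ {a b : V} (_ : G.Walk a b),
      (a ∈ S ∧ ∀ m, G.Adj a m → ℓ a m = M) → (b ∈ S ∧ ∀ m, G.Adj b m → ℓ b m = M) := by
    intro a b w
    induction w with
    | nil => exact id
    | cons h p ih => intro ha; exact ih (hstep _ _ h ha)
  obtain ⟨v, hv⟩ := Infinite.exists_notMem_finset S
  obtain ⟨w⟩ := hpre v₀ v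
  exact hv (key w ⟨h0, h00.2.1⟩).1

theorem constant_boundary_unique_solution {V : Type*} (G : SimpleGraph V) [G.LocallyFinite]
    [Infinite V] (hconn : G.Connected) (hacyc : G.IsAcyclic)
    (q : ℕ) (hq : 1 ≤ q) (hdeg : ∀ v, G.degree v = q + 1)
    (ℓ : V → V → ℝ) (hsymm : ∀ u v, ℓ u v = ℓ v u)
    (hpos : ∀ u v, G.Adj u v → 0 < ℓ u v)
    (S : Finset V) (hScon : (G.induce (↑S : Set V)).Connected)
    (B : Set V) (hB : B = {i | i ∈ S ∧ ∃ j, G.Adj i j ∧ j ∉ S})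
    (c : ℝ) (hc : 0 < c)
    (hbdy : ∀ i j, G.Adj i j →
      ((i ∈ B ∧ j ∈ B) ∨ (i ∈ B ∧ j ∉ S) ∨ (j ∈ B ∧ i ∉ S)) → ℓ i j = c)
    (heom : ∀ i j, G.Adj i j → i ∈ S → j ∈ S → tEoM G ℓ i j) :
    ∀ i j, G.Adj i j → i ∈ S → j ∈ S → ℓ i j = c := by
  have hdeg' : ∀ v, (G.neighborFinset v).Nonempty := by
    intro v
    apply Finset.card_pos.mp
    have h2 : (G.neighborFinset v).card = q + 1 := hdeg v
    omega
  have hbdy' : ∀ i j, G.Adj i j → i ∈ S → j ∉ S → ℓ i j = c := by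
    intro i j hadj hiS hjS
    apply hbdy i j hadj
    exact Or.inr (Or.inl ⟨by rw [hB]; exact ⟨hiS, j, hadj, hjS⟩, hjS⟩)
  intro i j hadj hiS hjS
  set EE : Finset ℝ := S.biUnion (fun v => (G.neighborFinset v).image (fun k => ℓ v k))
    with hEE
  have hmem : ∀ v ∈ S, ∀ k, G.Adj v k → ℓ v k ∈ EE := by
    intro v hv k hk
    rw [hEE]
    exact Finset.mem_biUnion.mpr ⟨v, hv,
      Finset.mem_image.mpr ⟨k, (SimpleGraph.mem_neighborFinset G v k).mpr hk, rfl⟩⟩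
  have hne : EE.Nonempty := ⟨ℓ i j, hmem i hiS j hadj⟩
  have hmemrev : ∀ x ∈ EE, ∃ v ∈ S, ∃ k, G.Adj v k ∧ ℓ v k = x := by
    intro x hx
    rw [hEE] at hx
    obtain ⟨v, hv, hx⟩ := Finset.mem_biUnion.mp hx
    obtain ⟨k, hk, rfl⟩ := Finset.mem_image.mp hx
    exact ⟨v, hv, k, (SimpleGraph.mem_neighborFinset G v k).mp hk, rfl⟩
  have hMle : EE.max' hne ≤ c := by
    by_contra h
    push_neg at h
    obtain ⟨v₀, hv₀, k₀, hadj0, hval⟩ := hmemrev _ (EE.max'_mem hne)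
    exact max_key G hconn.preconnected hdeg' ℓ hpos S c hc hbdy' heom (EE.max' hne) h
      (fun v hv k hk => Finset.le_max' EE _ (hmem v hv k hk)) v₀ k₀ hadj0 hv₀ hval
  have hmge : c ≤ EE.min' hne := by
    by_contra h
    push_neg at h
    obtain ⟨v₀, hv₀, k₀, hadj0, hval⟩ := hmemrev _ (EE.min'_mem hne)
    have hmpos : 0 < EE.min' hne := by rw [← hval]; exact hpos v₀ k₀ hadj0
    exact min_key G hconn.preconnected hdeg' ℓ hpos S c hc hbdy' heom (EE.min' hne) h hmpos
      (fun v hv k hk => Finset.min'_le EE _ (hmem v hv k hk)) v₀ k₀ hadj0 hv₀ hval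
  have h1 : ℓ i j ≤ EE.max' hne := Finset.le_max' EE _ (hmem i hiS j hadj)
  have h2 : EE.min' hne ≤ ℓ i j := Finset.min'_le EE _ (hmem i hiS j hadj)
  linarith
end

section
/- Let G be an infinite tree in which every vertex has degree q+1 for some q ≥ 1, equipped with positive symmetric edge weights ℓ, and suppose there is a constant c > 0 such that for every injective sequence of vertices (v_n)_{n∈ℕ} with v_n adjacent to v_{n+1} for all n, the edge lengths ℓ(v_n, v_{n+1}) converge to c as n → ∞. If the tree equation of motion holds at every edge of G, then ℓ(e) = c for every edge e of G. -/
open Finset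

/-!
Write `u_i = c_i / d_i`. At a vertex, `u_i` is the mean of the lengths of the incident edges
weighted by `1/ℓ²`, and the tEoM says that `ℓ(i,j) = (u_i² + u_j²)/(u_i + u_j)` lies between
`u_i` and `u_j`. Suppose `ℓ(i,j) > c`, and orient the edge so that `ℓ(i,j) ≤ u_j`. Since the degree
is at least two, the weighted mean at `j` provides an edge `j k` with `k ≠ i` and
`ℓ(j,k) ≥ u_j ≥ ℓ(i,j)`, and then `ℓ(j,k) ≤ u_k` by the tEoM on `j k`. Iterating gives a
non-backtracking, hence (in a tree) injective, path along which the lengths never drop below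
`ℓ(i,j)`, contradicting their convergence to `c`. The case `ℓ(i,j) < c` is symmetric.
-/

namespace SimpleGraph

variable {V : Type*} {G : SimpleGraph V}

def walkOfSeq (v : ℕ → V) (hadj : ∀ n, G.Adj (v n) (v (n + 1))) :
    (n : ℕ) → G.Walk (v 0) (v n)
  | 0 => .nil
  | n + 1 => (walkOfSeq v hadj n).concat (hadj n)

lemma support_walkOfSeq (v : ℕ → V) (hadj : ∀ n, G.Adj (v n) (v (n + 1))) (n : ℕ) :
    (walkOfSeq v hadj n).support = (List.range (n + 1)).map v := by
  induction n with
  | zero => rfl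
  | succ n ih =>
    rw [walkOfSeq, Walk.support_concat, ih, List.range_succ (n := n + 1), List.map_append,
      List.map_singleton]

lemma edges_walkOfSeq (v : ℕ → V) (hadj : ∀ n, G.Adj (v n) (v (n + 1))) (n : ℕ) :
    (walkOfSeq v hadj n).edges = (List.range n).map fun m => s(v m, v (m + 1)) := by
  induction n with
  | zero => rfl
  | succ n ih =>
    rw [walkOfSeq, Walk.edges_concat, ih, List.range_succ, List.map_append, List.map_singleton,
      List.concat_eq_append]

lemma IsAcyclic.injective_of_nonbacktracking (hG : G.IsAcyclic) (v : ℕ → V)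
    (hadj : ∀ n, G.Adj (v n) (v (n + 1))) (hnb : ∀ n, v (n + 2) ≠ v n) :
    Function.Injective v := by
  have hpath : ∀ n, (walkOfSeq v hadj n).IsPath := fun n => by
    rw [hG.isPath_iff_isChain, edges_walkOfSeq, List.isChain_map, List.isChain_range]
    intro m _ hm
    obtain ⟨-, h⟩ | ⟨h, -⟩ := Sym2.eq_iff.mp hm
    · exact (hadj (m + 1)).ne h
    · exact hnb m h.symm
  intro a b hab
  have hnodup := (hpath (a + b)).support_nodup
  rw [support_walkOfSeq] at hnodup
  exact List.inj_on_of_nodup_map hnodup (List.mem_range.mpr (by omega))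
    (List.mem_range.mpr (by omega)) hab

end SimpleGraph

lemma exists_seq_of_forall_exists_ne {V : Type*} (P : V → V → Prop)
    (hstep : ∀ a b, P a b → ∃ c, c ≠ a ∧ P b c) {i j : V} (hij : P i j) :
    ∃ v : ℕ → V, (∀ n, P (v n) (v (n + 1))) ∧ ∀ n, v (n + 2) ≠ v n := by
  choose next hne hnext using fun e : {e : V × V // P e.1 e.2} => hstep e.1.1 e.1.2 e.2
  let step : ℕ → {e : V × V // P e.1 e.2} :=
    Nat.rec ⟨(i, j), hij⟩ fun _ e => ⟨(e.1.2, next e), hnext e⟩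
  exact ⟨fun n => (step n).1.1, fun n => (step n).2, fun n => hne (step n)⟩

/-! The sign `s` is `1` or `-1` in the applications: it lets one statement cover both the
`≤` and the `≥` direction. -/

lemma sign_mul_sub_nonpos_of_mul_sub_eq {a b ℓ s : ℝ} (ha : 0 < a) (hb : 0 < b)
    (h : a * (a - ℓ) = b * (ℓ - b)) (hs : s * (a - ℓ) ≤ 0) : s * (ℓ - b) ≤ 0 := by
  have : b * (s * (ℓ - b)) ≤ 0 :=
    calc b * (s * (ℓ - b)) = a * (s * (a - ℓ)) := by linear_combination s * h.symm
      _ ≤ 0 := mul_nonpos_of_nonneg_of_nonpos ha.le hs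
  exact nonpos_of_mul_nonpos_right this hb

lemma sign_mul_sub_nonpos_or_of_mul_sub_eq {a b ℓ s : ℝ} (ha : 0 < a) (hb : 0 < b)
    (h : a * (a - ℓ) = b * (ℓ - b)) : s * (ℓ - b) ≤ 0 ∨ s * (ℓ - a) ≤ 0 := by
  by_cases hsa : s * (ℓ - a) ≤ 0
  · exact .inr hsa
  · exact .inl (sign_mul_sub_nonpos_of_mul_sub_eq ha hb h (by linarith))

lemma exists_ne_nonneg_of_sum_mul_eq_zero {ι : Type*} {s : Finset ι} {w f : ι → ℝ}
    (hw : ∀ k ∈ s, 0 < w k) (hsum : ∑ k ∈ s, w k * f k = 0) (hs : 1 < #s) {i : ι}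
    (hi : i ∈ s) (hfi : f i ≤ 0) : ∃ k ∈ s, k ≠ i ∧ 0 ≤ f k := by
  by_contra! hneg
  obtain ⟨j, hj, hji⟩ := exists_mem_ne hs i
  have hle : ∀ k ∈ s, w k * f k ≤ 0 := fun k hk => by
    obtain rfl | hki := eq_or_ne k i
    · exact mul_nonpos_of_nonneg_of_nonpos (hw k hk).le hfi
    · exact (mul_neg_of_pos_of_neg (hw k hk) (hneg k hk hki)).le
  have hlt : ∑ k ∈ s, w k * f k < ∑ k ∈ s, (0 : ℝ) :=
    sum_lt_sum hle ⟨j, hj, mul_neg_of_pos_of_neg (hw j hj) (hneg j hj hji)⟩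
  simp only [sum_const_zero] at hlt
  linarith

section LocallyFinite

variable {V : Type*} {G : SimpleGraph V} [G.LocallyFinite] {ℓ : V → V → ℝ}

variable (G ℓ) in
noncomputable def meanLength (i : V) : ℝ := cv G ℓ i / dv G ℓ i

lemma sum_inv_sq_mul_sub_meanLength (j : V) (hpos : ∀ k, G.Adj j k → 0 < ℓ j k)
    (hdeg : 0 < G.degree j) :
    ∑ k ∈ G.neighborFinset j, (ℓ j k)⁻¹ ^ 2 * (ℓ j k - meanLength G ℓ j) = 0 := by
  have hdv : dv G ℓ j ≠ 0 := (sum_pos (fun k hk => by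
    have := hpos k ((G.mem_neighborFinset j k).mp hk); positivity)
    (card_pos.mp (G.card_neighborFinset_eq_degree j ▸ hdeg))).ne'
  have hcv : ∑ k ∈ G.neighborFinset j, (ℓ j k)⁻¹ ^ 2 * ℓ j k = cv G ℓ j :=
    sum_congr rfl fun k hk => by
      have := (hpos k ((G.mem_neighborFinset j k).mp hk)).ne'
      field_simp
  simp only [mul_sub, sum_sub_distrib, ← sum_mul, hcv]
  rw [meanLength, ← dv, mul_div_cancel₀ _ hdv, sub_self]

lemma meanLength_pos (j : V) (hpos : ∀ k, G.Adj j k → 0 < ℓ j k) (hdeg : 0 < G.degree j) :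
    0 < meanLength G ℓ j := by
  have hne := card_pos.mp (G.card_neighborFinset_eq_degree j ▸ hdeg)
  have hℓ : ∀ k ∈ G.neighborFinset j, 0 < (ℓ j k)⁻¹ := fun k hk =>
    inv_pos.mpr (hpos k ((G.mem_neighborFinset j k).mp hk))
  exact div_pos (sum_pos hℓ hne) (sum_pos (fun k hk => pow_pos (hℓ k hk) 2) hne)

lemma tEoM.mul_sub_eq {i j : V} (h : tEoM G ℓ i j) (hℓ : ℓ i j ≠ 0) :
    meanLength G ℓ i * (meanLength G ℓ i - ℓ i j) =
      meanLength G ℓ j * (ℓ i j - meanLength G ℓ j) := by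
  have h' : (ℓ i j)⁻¹ * (meanLength G ℓ i ^ 2 + meanLength G ℓ j ^ 2)
      - meanLength G ℓ i - meanLength G ℓ j = 0 := h
  field_simp at h'
  linear_combination h'

lemma exists_adj_ne_sign_mul_sub_nonpos (hsymm : ∀ u v, ℓ u v = ℓ v u)
    (hpos : ∀ u v, G.Adj u v → 0 < ℓ u v) (hdeg : ∀ v, 1 < G.degree v)
    (heom : ∀ i j, G.Adj i j → tEoM G ℓ i j) (s : ℝ) {a b : V} (hab : G.Adj a b)
    (h : s * (ℓ a b - meanLength G ℓ b) ≤ 0) :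
    ∃ c, c ≠ a ∧ G.Adj b c ∧ s * (ℓ a b - ℓ b c) ≤ 0 ∧
      s * (ℓ b c - meanLength G ℓ c) ≤ 0 := by
  have hu v : 0 < meanLength G ℓ v := meanLength_pos v (hpos v) (Nat.zero_lt_of_lt (hdeg v))
  have hw : ∀ k ∈ G.neighborFinset b, 0 < (ℓ b k)⁻¹ ^ 2 := fun k hk =>
    pow_pos (inv_pos.mpr (hpos b k ((G.mem_neighborFinset b k).mp hk))) 2
  have hsum :
      ∑ k ∈ G.neighborFinset b, (ℓ b k)⁻¹ ^ 2 * (s * (ℓ b k - meanLength G ℓ b)) = 0 := by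
    simp only [mul_left_comm _ s, ← mul_sum,
      sum_inv_sq_mul_sub_meanLength b (hpos b) (Nat.zero_lt_of_lt (hdeg b)), mul_zero]
  obtain ⟨c, hc, hca, hsc⟩ := exists_ne_nonneg_of_sum_mul_eq_zero hw hsum
    (by rw [G.card_neighborFinset_eq_degree]; exact hdeg b)
    ((G.mem_neighborFinset b a).mpr hab.symm) (by rwa [hsymm])
  have hbc := (G.mem_neighborFinset b c).mp hc
  have hcu := sign_mul_sub_nonpos_of_mul_sub_eq (hu b) (hu c)
    ((heom b c hbc).mul_sub_eq (hpos b c hbc).ne') (s := s) (by linarith)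
  exact ⟨c, hca, hbc, by linarith, hcu⟩

lemma sign_mul_sub_limit_nonpos (hacyc : G.IsAcyclic) (hsymm : ∀ u v, ℓ u v = ℓ v u)
    (hpos : ∀ u v, G.Adj u v → 0 < ℓ u v) (hdeg : ∀ v, 1 < G.degree v)
    (heom : ∀ i j, G.Adj i j → tEoM G ℓ i j) {c : ℝ}
    (hasym : ∀ v : ℕ → V, Function.Injective v → (∀ n, G.Adj (v n) (v (n + 1))) →
      Filter.Tendsto (fun n => ℓ (v n) (v (n + 1))) Filter.atTop (nhds c))
    (s : ℝ) {i j : V} (hij : G.Adj i j) (h : s * (ℓ i j - meanLength G ℓ j) ≤ 0) :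
    s * (ℓ i j - c) ≤ 0 := by
  obtain ⟨v, hv, hnb⟩ := exists_seq_of_forall_exists_ne
    (fun a b => G.Adj a b ∧ s * (ℓ a b - meanLength G ℓ b) ≤ 0 ∧ s * (ℓ i j - ℓ a b) ≤ 0)
    (fun a b ⟨hab, hb, hij⟩ => by
      obtain ⟨c, hca, hbc, hle, hc⟩ :=
        exists_adj_ne_sign_mul_sub_nonpos hsymm hpos hdeg heom s hab hb
      exact ⟨c, hca, hbc, hc, by linarith⟩)
    ⟨hij, h, by simp⟩
  have hadj n := (hv n).1
  have hlim := (hasym v (hacyc.injective_of_nonbacktracking v hadj hnb) hadj).const_sub (ℓ i j)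
  exact le_of_tendsto' (hlim.const_mul s) fun n => (hv n).2.2

end LocallyFinite

theorem asymptotically_constant_unique_solution_general {V : Type*} (G : SimpleGraph V)
    [G.LocallyFinite] (hacyc : G.IsAcyclic)
    (q : ℕ) (hq : 1 ≤ q) (hdeg : ∀ v, G.degree v = q + 1)
    (ℓ : V → V → ℝ) (hsymm : ∀ u v, ℓ u v = ℓ v u)
    (hpos : ∀ u v, G.Adj u v → 0 < ℓ u v)
    (c : ℝ)
    (hasym : ∀ v : ℕ → V, Function.Injective v → (∀ n, G.Adj (v n) (v (n + 1))) →
      Filter.Tendsto (fun n => ℓ (v n) (v (n + 1))) Filter.atTop (nhds c))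
    (heom : ∀ i j, G.Adj i j → tEoM G ℓ i j) :
    ∀ i j, G.Adj i j → ℓ i j = c := by
  intro i j hij
  have hdeg' v : 1 < G.degree v := by rw [hdeg]; omega
  have hu v : 0 < meanLength G ℓ v := meanLength_pos v (hpos v) (Nat.zero_lt_of_lt (hdeg' v))
  have hbound (s : ℝ) : s * (ℓ i j - c) ≤ 0 := by
    rcases sign_mul_sub_nonpos_or_of_mul_sub_eq (hu i) (hu j)
      ((heom i j hij).mul_sub_eq (hpos i j hij).ne') (s := s) with h | h
    · exact sign_mul_sub_limit_nonpos hacyc hsymm hpos hdeg' heom hasym s hij h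
    · rw [hsymm] at h ⊢
      exact sign_mul_sub_limit_nonpos hacyc hsymm hpos hdeg' heom hasym s hij.symm h
  linarith [hbound 1, hbound (-1)]

theorem asymptotically_constant_unique_solution {V : Type*} (G : SimpleGraph V)
    [G.LocallyFinite] [Infinite V] (hconn : G.Connected) (hacyc : G.IsAcyclic)
    (q : ℕ) (hq : 1 ≤ q) (hdeg : ∀ v, G.degree v = q + 1)
    (ℓ : V → V → ℝ) (hsymm : ∀ u v, ℓ u v = ℓ v u)
    (hpos : ∀ u v, G.Adj u v → 0 < ℓ u v)
    (c : ℝ) (hc : 0 < c)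
    (hasym : ∀ v : ℕ → V, Function.Injective v → (∀ n, G.Adj (v n) (v (n + 1))) →
      Filter.Tendsto (fun n => ℓ (v n) (v (n + 1))) Filter.atTop (nhds c))
    (heom : ∀ i j, G.Adj i j → tEoM G ℓ i j) :
    ∀ i j, G.Adj i j → ℓ i j = c :=
  asymptotically_constant_unique_solution_general G hacyc q hq hdeg ℓ hsymm hpos c hasym heom
end

section
/- Let G be a locally finite graph with positive symmetric edge weights ℓ, let Σ be a finite set of vertices each of which has at least one neighbor, and let B ⊆ Σ be the set of vertices of Σ having at least one neighbor outside Σ. With c_i, d_i computed over all neighbors of i in G, suppose the tree equation of motion holds at every edge with both endpoints in Σ. Then Σ_{i∈B} (c_i/d_i) · Σ_{j∼i, j∈Σ} ( c_i/(d_i·ℓ(i,j)) − 1 ) ≥ 0. In particular, if this boundary sum is strictly negative for some weight assignment on the edges incident to B, no weight assignment on the remaining edges can satisfy the equations of motion on all edges inside Σ. -/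
open Finset

theorem boundary_sum_nonneg_of_eom {V : Type*} [DecidableEq V]
    (G : SimpleGraph V) [G.LocallyFinite]
    (ℓ : V → V → ℝ) (hsymm : ∀ u v, ℓ u v = ℓ v u)
    (hpos : ∀ u v, G.Adj u v → 0 < ℓ u v)
    (S : Finset V) (hS : ∀ i ∈ S, 0 < G.degree i)
    (B : Finset V) (hB : ∀ i, i ∈ B ↔ i ∈ S ∧ ∃ j, G.Adj i j ∧ j ∉ S)
    (heom : ∀ i j, G.Adj i j → i ∈ S → j ∈ S → tEoM G ℓ i j) :
    0 ≤ ∑ i ∈ B, (cv G ℓ i / dv G ℓ i) *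
        ∑ j ∈ (G.neighborFinset i).filter (fun j => j ∈ S),
          (cv G ℓ i / (dv G ℓ i * ℓ i j) - 1) := by
  classical
  set t : V → ℝ := fun i => cv G ℓ i / dv G ℓ i with ht
  set f : V → ℝ := fun i => t i *
      ∑ j ∈ (G.neighborFinset i).filter (fun j => j ∈ S),
        (cv G ℓ i / (dv G ℓ i * ℓ i j) - 1) with hf
  have hBS : B ⊆ S := fun i hi => ((hB i).1 hi).1
  -- positivity
  have hcpos : ∀ i ∈ S, 0 < cv G ℓ i := by
    intro i hi
    have hne : (G.neighborFinset i).Nonempty := by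
      rw [← Finset.card_pos, G.card_neighborFinset_eq_degree]; exact hS i hi
    exact Finset.sum_pos (fun k hk => by
      have := hpos i k ((G.mem_neighborFinset i k).mp hk)
      positivity) hne
  have hdpos : ∀ i ∈ S, 0 < dv G ℓ i := by
    intro i hi
    have hne : (G.neighborFinset i).Nonempty := by
      rw [← Finset.card_pos, G.card_neighborFinset_eq_degree]; exact hS i hi
    exact Finset.sum_pos (fun k hk => by
      have := hpos i k ((G.mem_neighborFinset i k).mp hk)
      positivity) hne
  -- rewrite f using t/ℓ
  have hfeq : ∀ i, f i = ∑ j ∈ (G.neighborFinset i).filter (fun j => j ∈ S),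
      (t i * (t i / ℓ i j - 1)) := by
    intro i
    simp only [hf, Finset.mul_sum]
    refine Finset.sum_congr rfl fun j hj => ?_
    simp only [ht, div_div]
  -- pair cancellation
  have hpair : ∀ i j, G.Adj i j → i ∈ S → j ∈ S →
      t i * (t i / ℓ i j - 1) + t j * (t j / ℓ j i - 1) = 0 := by
    intro i j hadj hi hj
    have h := heom i j hadj hi hj
    unfold tEoM at h
    simp only [ht, hsymm j i]
    linear_combination h
  -- sum over S is zero
  have hsumS : ∑ i ∈ S, f i = 0 := by
    have hconv : ∀ i, f i = ∑ j ∈ S, (if G.Adj i j then t i * (t i / ℓ i j - 1) else 0) := by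
      intro i
      rw [hfeq, ← Finset.sum_filter]
      apply Finset.sum_congr _ (fun _ _ => rfl)
      ext j
      simp [SimpleGraph.mem_neighborFinset, and_comm]
    have h2 : (∑ i ∈ S, f i) + (∑ i ∈ S, f i) = 0 := by
      nth_rewrite 2 [show (∑ i ∈ S, f i) = ∑ j ∈ S, ∑ i ∈ S,
          (if G.Adj j i then t j * (t j / ℓ j i - 1) else 0) by
        simp only [hconv]]
      rw [Finset.sum_comm (s := S) (t := S)]
      simp only [hconv]
      rw [← Finset.sum_add_distrib]
      refine Finset.sum_eq_zero fun i hi => ?_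
      rw [← Finset.sum_add_distrib]
      refine Finset.sum_eq_zero fun j hj => ?_
      by_cases hadj : G.Adj i j
      · rw [if_pos hadj, if_pos (hadj.symm)]
        exact hpair i j hadj hi hj
      · rw [if_neg hadj, if_neg (fun h => hadj h.symm), add_zero]
    linarith
  -- interior terms nonpositive
  have hint : ∀ i ∈ S, i ∉ B → f i ≤ 0 := by
    intro i hi hib
    have hall : ∀ j, G.Adj i j → j ∈ S := by
      intro j hadj
      by_contra hjs
      exact hib ((hB i).mpr ⟨hi, j, hadj, hjs⟩)
    have hfilt : (G.neighborFinset i).filter (fun j => j ∈ S) = G.neighborFinset i := by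
      apply Finset.filter_true_of_mem
      intro j hj
      exact hall j ((G.mem_neighborFinset i j).mp hj)
    have hsum : ∑ j ∈ (G.neighborFinset i).filter (fun j => j ∈ S),
        (t i * (t i / ℓ i j - 1)) = (t i * t i) * cv G ℓ i - (G.degree i : ℝ) * t i := by
      rw [hfilt, cv, Finset.mul_sum,
        show ((G.degree i : ℝ) * t i) = ∑ j ∈ G.neighborFinset i, t i by
          rw [Finset.sum_const, ← G.card_neighborFinset_eq_degree, nsmul_eq_mul],
        ← Finset.sum_sub_distrib]
      refine Finset.sum_congr rfl fun j hj => ?_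
      rw [div_eq_mul_inv]; ring
    rw [hfeq, hsum]
    have hcs : (cv G ℓ i) ^ 2 ≤ (G.degree i : ℝ) * dv G ℓ i := by
      have := sq_sum_le_card_mul_sum_sq (s := G.neighborFinset i)
        (f := fun k => (ℓ i k)⁻¹)
      rw [G.card_neighborFinset_eq_degree] at this
      exact_mod_cast this
    have hc := hcpos i hi
    have hd := hdpos i hi
    have ht0 : 0 ≤ t i := le_of_lt (by simp only [ht]; positivity)
    have htc : t i * cv G ℓ i ≤ (G.degree i : ℝ) := by
      simp only [ht]
      rw [div_mul_eq_mul_div, div_le_iff₀ hd]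
      calc cv G ℓ i * cv G ℓ i = (cv G ℓ i) ^ 2 := by ring
        _ ≤ (G.degree i : ℝ) * dv G ℓ i := hcs
    nlinarith [mul_nonneg ht0 (sub_nonneg.mpr htc)]
  -- combine
  have hsplit : ∑ i ∈ S, f i = ∑ i ∈ B, f i + ∑ i ∈ S \ B, f i := by
    rw [← Finset.sum_union (Finset.disjoint_sdiff), Finset.union_sdiff_of_subset hBS]
  have hSB : ∑ i ∈ S \ B, f i ≤ 0 :=
    Finset.sum_nonpos fun i hi => hint i (Finset.mem_sdiff.mp hi).1 (Finset.mem_sdiff.mp hi).2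
  have : 0 ≤ ∑ i ∈ B, f i := by linarith [hsumS, hsplit, hSB]
  simpa [hf, ht] using this
end

section
/- Let G be a finite graph with positive symmetric edge weights ℓ in which every vertex has at least one neighbor. Then the total tree-curvature action satisfies Σ_{{i,j}∈E(G)} K_{ij} = Σ_{i∈V(G)} (2 − c_i²/d_i). -/
/-!
Split `K_ij` into a share of each endpoint, `K_ij = κ(i,j) + κ(j,i)` with
`κ(i,j) = (2/ℓ(i,j)² − c_i/ℓ(i,j)) / d_i`. Summing over edges is then summing `κ` over darts,
i.e. over vertices `i` and their neighbours `j`, and at a fixed vertex the definitions of `c_i`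
and `d_i` give `Σ_{j∼i} κ(i,j) = (2 d_i − c_i²) / d_i`.
-/

open Finset

/-- The tree curvature of the edge `{i,j}`:
`K_{ij} = (2/ℓ(i,j)²)·(1/d_i + 1/d_j) − (1/ℓ(i,j))·(c_i/d_i + c_j/d_j)`. -/
noncomputable def treeCurv {V : Type*} (G : SimpleGraph V) [G.LocallyFinite]
    (ℓ : V → V → ℝ) (i j : V) : ℝ :=
  (2 / (ℓ i j) ^ 2) * (1 / dv G ℓ i + 1 / dv G ℓ j)
    - (1 / ℓ i j) * (cv G ℓ i / dv G ℓ i + cv G ℓ j / dv G ℓ j)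

namespace SimpleGraph

variable {V M : Type*} [Fintype V] [DecidableEq V] {G : SimpleGraph V} [DecidableRel G.Adj]
  [AddCommMonoid M]

theorem sum_edgeFinset_eq_sum_darts (F : Sym2 V → M) (f : V → V → M)
    (hF : ∀ i j, G.Adj i j → F s(i, j) = f i j + f j i) :
    ∑ e ∈ G.edgeFinset, F e = ∑ d : G.Dart, f d.fst d.snd := by
  rw [← sum_fiberwise_of_maps_to (g := Dart.edge) (t := G.edgeFinset)
    fun d _ => mem_edgeFinset.2 d.edge_mem]
  refine sum_congr rfl fun e he => ?_
  induction e using Sym2.ind with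
  | h i j =>
    let d : G.Dart := ⟨(i, j), mem_edgeFinset.1 he⟩
    calc F s(i, j) = f i j + f j i := hF i j d.adj
      _ = ∑ d' ∈ {d, d.symm}, f d'.fst d'.snd :=
        (sum_pair (f := fun d' : G.Dart => f d'.fst d'.snd) d.symm_ne.symm).symm
      _ = _ := by rw [← d.edge_fiber]; rfl

theorem sum_darts_eq_sum_neighborFinset [G.LocallyFinite] (f : V → V → M) :
    ∑ d : G.Dart, f d.fst d.snd = ∑ v, ∑ w ∈ G.neighborFinset v, f v w := by
  rw [← sum_fiberwise_of_maps_to (g := fun d : G.Dart => d.fst) (t := univ) fun d _ => mem_univ _]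
  refine sum_congr rfl fun v _ => ?_
  rw [dart_fst_fiber, sum_image fun _ _ _ _ h => G.dartOfNeighborSet_injective v h,
    ← sum_coe_sort (G.neighborFinset v)]
  exact Fintype.sum_equiv (Equiv.subtypeEquivRight fun w => (mem_neighborFinset G v w).symm) _ _
    fun _ => rfl

end SimpleGraph

theorem sum_two_mul_sq_sub_mul_sum_div {ι : Type*} (s : Finset ι) (w : ι → ℝ)
    (h : ∑ k ∈ s, w k ^ 2 ≠ 0) :
    ∑ k ∈ s, (2 * w k ^ 2 - w k * ∑ j ∈ s, w j) / ∑ j ∈ s, w j ^ 2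
      = 2 - (∑ k ∈ s, w k) ^ 2 / ∑ k ∈ s, w k ^ 2 := by
  rw [← sum_div, sum_sub_distrib, ← mul_sum, ← sum_mul]
  field_simp

section TreeCurvature

variable {V : Type*} (G : SimpleGraph V) [G.LocallyFinite] (ℓ : V → V → ℝ)

noncomputable def treeCurvHalf (i j : V) : ℝ :=
  (2 * (ℓ i j)⁻¹ ^ 2 - (ℓ i j)⁻¹ * cv G ℓ i) / dv G ℓ i

variable {G ℓ}

theorem treeCurv_eq_treeCurvHalf_add {i j : V} (h : ℓ i j = ℓ j i) :
    treeCurv G ℓ i j = treeCurvHalf G ℓ i j + treeCurvHalf G ℓ j i := by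
  rw [treeCurv, treeCurvHalf, treeCurvHalf, ← h]
  ring

theorem dv_pos {i : V} (hℓ : ∀ k, G.Adj i k → ℓ i k ≠ 0) (hi : 0 < G.degree i) :
    0 < dv G ℓ i := by
  refine sum_pos (fun k hk => ?_) (card_pos.1 (G.card_neighborFinset_eq_degree i ▸ hi))
  have := hℓ k ((G.mem_neighborFinset i k).1 hk)
  positivity

theorem sum_treeCurvHalf {i : V} (hi : dv G ℓ i ≠ 0) :
    ∑ j ∈ G.neighborFinset i, treeCurvHalf G ℓ i j = 2 - cv G ℓ i ^ 2 / dv G ℓ i :=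
  sum_two_mul_sq_sub_mul_sum_div _ (fun j => (ℓ i j)⁻¹) hi

end TreeCurvature

theorem sum_tree_curvature_eq {V : Type*} [Fintype V] [DecidableEq V]
    (G : SimpleGraph V) [DecidableRel G.Adj] [G.LocallyFinite]
    (ℓ : V → V → ℝ) (hsymm : ∀ u v, ℓ u v = ℓ v u)
    (hpos : ∀ u v, G.Adj u v → 0 < ℓ u v)
    (hdeg : ∀ v, 0 < G.degree v)
    (F : Sym2 V → ℝ)
    (hF : ∀ i j, G.Adj i j → F s(i, j) = treeCurv G ℓ i j) :
    ∑ e ∈ G.edgeFinset, F e = ∑ i, (2 - (cv G ℓ i) ^ 2 / dv G ℓ i) := by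
  calc ∑ e ∈ G.edgeFinset, F e = ∑ d : G.Dart, treeCurvHalf G ℓ d.fst d.snd :=
        G.sum_edgeFinset_eq_sum_darts F _ fun i j h =>
          (hF i j h).trans (treeCurv_eq_treeCurvHalf_add (hsymm i j))
    _ = ∑ i, ∑ j ∈ G.neighborFinset i, treeCurvHalf G ℓ i j :=
        G.sum_darts_eq_sum_neighborFinset _
    _ = _ := sum_congr rfl fun i _ =>
        sum_treeCurvHalf (dv_pos (fun k h => (hpos i k h).ne') (hdeg i)).ne'
end

section
/- Let C, D > 0 and set P* = 1/C + √(1/C² + 1/D). Then for every P > 0, (1 − C·P)/(1 + D·P²) ≥ (1 − C·P*)/(1 + D·(P*)²); that is, P* is a global minimizer over P > 0 of the function P ↦ 2·P^{−2}/(P^{−2} + D) − P^{−1}·(P^{−1} + C)/(P^{−2} + D), which equals (1 − C·P)/(1 + D·P²). -/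
theorem boundary_term_minimizer (C D : ℝ) (hC : 0 < C) (hD : 0 < D)
    (Pstar : ℝ) (hPstar : Pstar = 1 / C + Real.sqrt (1 / C ^ 2 + 1 / D)) :
    ∀ P : ℝ, 0 < P →
      (2 * (P⁻¹) ^ 2 / ((P⁻¹) ^ 2 + D) - P⁻¹ * (P⁻¹ + C) / ((P⁻¹) ^ 2 + D) =
        (1 - C * P) / (1 + D * P ^ 2)) ∧
      (1 - C * Pstar) / (1 + D * Pstar ^ 2) ≤ (1 - C * P) / (1 + D * P ^ 2) := by
  intro P hP
  have hPne : P ≠ 0 := ne_of_gt hP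
  have hden1 : (P⁻¹) ^ 2 + D > 0 := by positivity
  have hden2 : (0:ℝ) < 1 + D * P ^ 2 := by positivity
  have hden3 : (0:ℝ) < 1 + D * Pstar ^ 2 := by positivity
  set s := Real.sqrt (1 / C ^ 2 + 1 / D) with hs
  have hsnn : 0 ≤ s := Real.sqrt_nonneg _
  have hssq : s ^ 2 = 1 / C ^ 2 + 1 / D := by
    rw [hs, Real.sq_sqrt]; positivity
  have hs2 : C ^ 2 * D * s ^ 2 = D + C ^ 2 := by
    field_simp at hssq
    linarith
  have hq : C * D * Pstar ^ 2 - 2 * D * Pstar - C = 0 := by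
    rw [hPstar]
    have hC' : C ≠ 0 := ne_of_gt hC
    field_simp
    nlinarith [hs2]
  have hCs : 0 ≤ C * Pstar - 1 := by
    rw [hPstar]
    have : C * (1 / C) = 1 := by field_simp
    nlinarith [mul_nonneg hC.le hsnn]
  constructor
  · field_simp
    ring
  · rw [div_le_div_iff₀ hden3 hden2]
    nlinarith [hq, mul_nonneg (mul_nonneg hD.le hCs) (sq_nonneg (Pstar - P))]
end

section
/- Let V be a finite set with |V| = n ≥ 2, let ℓ > 0, and let d be the metric on V with d(u,v) = ℓ for all u ≠ v. For each point i take N(i) = V∖{i}, and let 0 < t < (n−1)/n. Then for all distinct i, j in V, W(D_{t,i}, D_{t,j}) = ℓ·(1 − n·t/(n−1)), and consequently Σ_{unordered pairs {i,j} of distinct points} ( 1 − W(D_{t,i}, D_{t,j})/d(i,j) ) = (n²/2)·t. -/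
open Finset

/-! On a metric with all distances `ℓ`, a coupling pays `ℓ` for exactly the mass it moves off the
diagonal, and its diagonal mass at `u` is at most `min (μ u) (ν u)`. With `N(i) = V ∖ {i}`,
`D_{t,i}` puts `1 - t` on `i` and `m = t / (n - 1)` on every other point, so `D_{t,i}` and `D_{t,j}`
share at most `m` at each point, and keeping `m` in place while moving the excess `1 - t - m`
straight from `i` to `j` is optimal. Hence `W = ℓ (1 - t - m) = ℓ (1 - n t / (n - 1))`, every one
of the `n (n - 1) / 2` edges contributes `n t / (n - 1)`, and the sum is `n² t / 2`. -/

open Finset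

section Coupling

variable {V : Type*} [Fintype V]

theorem IsCoupling.diag_le_left {μ ν : V → ℝ} {A : V → V → ℝ} (hA : IsCoupling μ ν A) (u : V) :
    A u u ≤ μ u :=
  hA.2.1 u ▸ single_le_sum (fun v _ => hA.1 u v) (mem_univ u)

theorem IsCoupling.diag_le_right {μ ν : V → ℝ} {A : V → V → ℝ} (hA : IsCoupling μ ν A) (v : V) :
    A v v ≤ ν v :=
  hA.2.2 v ▸ single_le_sum (f := fun u => A u v) (fun u _ => hA.1 u v) (mem_univ v)

theorem isCoupling_update_const [DecidableEq V] {m a : ℝ} (hm : 0 ≤ m) (hma : m ≤ a) (i j : V) :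
    IsCoupling (Function.update (fun _ => m) i a) (Function.update (fun _ => m) j a)
      (fun u v => (if u = v then m else 0) + if u = i ∧ v = j then a - m else 0) := by
  refine ⟨fun u v => ?_, fun u => ?_, fun v => ?_⟩
  · have : 0 ≤ a - m := sub_nonneg.2 hma
    positivity
  · by_cases hu : u = i <;> simp [sum_add_distrib, hu]
  · by_cases hv : v = j <;> simp [sum_add_distrib, hv]

theorem Wcost_eq_of_isCoupling [MetricSpace V] {μ ν : V → ℝ} {A : V → V → ℝ}
    (hA : IsCoupling μ ν A)
    (hmin : ∀ B, IsCoupling μ ν B →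
      ∑ u, ∑ v, A u v * dist u v ≤ ∑ u, ∑ v, B u v * dist u v) :
    Wcost μ ν = ∑ u, ∑ v, A u v * dist u v := by
  have hlow : ∀ c ∈ {c : ℝ | ∃ B : V → V → ℝ, IsCoupling μ ν B ∧
      c = ∑ u, ∑ v, B u v * dist u v}, ∑ u, ∑ v, A u v * dist u v ≤ c := by
    rintro c ⟨B, hB, rfl⟩
    exact hmin B hB
  exact le_antisymm (csInf_le ⟨_, hlow⟩ ⟨A, hA, rfl⟩) (le_csInf ⟨_, A, hA, rfl⟩ hlow)

end Coupling

section UniformMetric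

variable {V : Type*} [Fintype V] [MetricSpace V] {l : ℝ}

theorem transportCost_of_dist_eq (hd : ∀ u v : V, u ≠ v → dist u v = l) {μ : V → ℝ}
    {A : V → V → ℝ} (hrow : ∀ u, ∑ v, A u v = μ u) :
    ∑ u, ∑ v, A u v * dist u v = l * ∑ u, (μ u - A u u) := by
  classical
  rw [mul_sum]
  refine sum_congr rfl fun u _ => ?_
  rw [← add_sum_erase _ _ (mem_univ u), dist_self, mul_zero, zero_add,
    sum_congr rfl fun v hv => by rw [hd u v (ne_of_mem_erase hv).symm],
    ← sum_mul, sum_erase_eq_sub (mem_univ u), hrow u, mul_comm]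

variable [DecidableEq V]

theorem Wcost_update_const_of_dist_eq (hd : ∀ u v : V, u ≠ v → dist u v = l) (hl : 0 ≤ l)
    {m a : ℝ} (hm : 0 ≤ m) (hma : m ≤ a) {i j : V} (hij : i ≠ j) :
    Wcost (Function.update (fun _ => m) i a) (Function.update (fun _ => m) j a) = l * (a - m) := by
  set μ := Function.update (fun _ : V => m) i a
  have hexcess : ∑ u, (μ u - m) = a - m :=
    (Fintype.sum_eq_single i fun u hu => by simp [μ, hu]).trans (by simp [μ])
  set A : V → V → ℝ := fun u v => (if u = v then m else 0) + if u = i ∧ v = j then a - m else 0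
  have hA : IsCoupling μ _ A := isCoupling_update_const hm hma i j
  have hAdiag : ∀ u, A u u = m := fun u => by
    simp only [A, if_true, add_eq_left, ite_eq_right_iff, and_imp]
    rintro rfl rfl
    exact absurd rfl hij
  rw [Wcost_eq_of_isCoupling hA fun B hB => ?_, transportCost_of_dist_eq hd hA.2.1]
  · simp only [hAdiag, hexcess]
  · have hdiag : ∀ u, B u u ≤ m := fun u => by
      by_cases hu : u = i
      · simpa [hu, hij] using hB.diag_le_right u
      · simpa [μ, hu] using hB.diag_le_left u
    rw [transportCost_of_dist_eq hd hA.2.1, transportCost_of_dist_eq hd hB.2.1]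
    refine mul_le_mul_of_nonneg_left (sum_le_sum fun u _ => ?_) hl
    linarith [hAdiag u, hdiag u]

end UniformMetric

section CompleteGraph

variable {V : Type*} [Fintype V] [MetricSpace V] [DecidableEq V] {l : ℝ}

theorem Dprob_univ_erase_of_dist_eq (hn : 2 ≤ Fintype.card V) (hl : 0 < l)
    (hd : ∀ u v : V, u ≠ v → dist u v = l) (t : ℝ) (i : V) :
    Dprob (univ.erase i) t i =
      Function.update (fun _ => t / ((Fintype.card V : ℝ) - 1)) i (1 - t) := by
  have hn1 : (Fintype.card V : ℝ) - 1 ≠ 0 := by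
    have : (2 : ℝ) ≤ Fintype.card V := by exact_mod_cast hn
    linarith
  have hdd : dd (univ.erase i) i = ((Fintype.card V : ℝ) - 1) * (l⁻¹) ^ 2 := by
    rw [dd, sum_congr rfl fun k hk => by rw [hd i k (ne_of_mem_erase hk).symm], sum_const,
      card_erase_of_mem (mem_univ i), card_univ, nsmul_eq_mul,
      Nat.cast_sub (by omega : 1 ≤ Fintype.card V), Nat.cast_one]
  funext v
  by_cases hv : v = i
  · simp [Dprob, hv]
  · simp only [Dprob, hv, if_false, mem_erase, ne_eq, mem_univ, and_true, not_false_eq_true,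
      if_true, Function.update_of_ne hv, hdd, hd i v (Ne.symm hv)]
    field_simp

theorem Wcost_Dprob_univ_erase_of_dist_eq (hn : 2 ≤ Fintype.card V) (hl : 0 < l)
    (hd : ∀ u v : V, u ≠ v → dist u v = l) {t : ℝ} (ht0 : 0 < t)
    (ht1 : t < ((Fintype.card V : ℝ) - 1) / (Fintype.card V : ℝ)) {i j : V} (hij : i ≠ j) :
    Wcost (Dprob (univ.erase i) t i) (Dprob (univ.erase j) t j) =
      l * (1 - (Fintype.card V : ℝ) * t / ((Fintype.card V : ℝ) - 1)) := by
  have hn2 : (2 : ℝ) ≤ Fintype.card V := by exact_mod_cast hn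
  have hn1 : 0 < (Fintype.card V : ℝ) - 1 := by linarith
  have hnt : t * Fintype.card V < Fintype.card V - 1 := (lt_div_iff₀ (by linarith)).1 ht1
  have hma : t / ((Fintype.card V : ℝ) - 1) ≤ 1 - t := by
    rw [div_le_iff₀ hn1]
    nlinarith
  rw [Dprob_univ_erase_of_dist_eq hn hl hd, Dprob_univ_erase_of_dist_eq hn hl hd,
    Wcost_update_const_of_dist_eq hd hl.le (div_nonneg ht0.le hn1.le) hma hij]
  field_simp
  ring

end CompleteGraph

theorem complete_graph_constant_setting_action {V : Type*} [Fintype V] [MetricSpace V]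
    [DecidableEq V] (hn : 2 ≤ Fintype.card V)
    (l : ℝ) (hl : 0 < l) (hd : ∀ u v : V, u ≠ v → dist u v = l)
    (t : ℝ) (ht0 : 0 < t) (ht1 : t < ((Fintype.card V : ℝ) - 1) / (Fintype.card V : ℝ))
    (F : Sym2 V → ℝ)
    (hF : ∀ i j : V, i ≠ j → F s(i, j) =
      1 - Wcost (Dprob (Finset.univ.erase i) t i) (Dprob (Finset.univ.erase j) t j) / dist i j) :
    (∀ i j : V, i ≠ j →
      Wcost (Dprob (Finset.univ.erase i) t i) (Dprob (Finset.univ.erase j) t j) =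
        l * (1 - (Fintype.card V : ℝ) * t / ((Fintype.card V : ℝ) - 1))) ∧
    ∑ e ∈ Finset.univ.filter (fun e : Sym2 V => ¬ e.IsDiag), F e =
      ((Fintype.card V : ℝ) ^ 2 / 2) * t := by
  have hW := fun i j (hij : i ≠ j) => Wcost_Dprob_univ_erase_of_dist_eq hn hl hd ht0 ht1 hij
  refine ⟨hW, ?_⟩
  have hedge : ∀ e ∈ univ.filter (fun e : Sym2 V => ¬ e.IsDiag),
      F e = (Fintype.card V : ℝ) * t / ((Fintype.card V : ℝ) - 1) := by
    intro e he
    induction e using Sym2.inductionOn with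
    | hf i j =>
      have hij : i ≠ j := by simpa using he
      rw [hF i j hij, hW i j hij, hd i j hij, mul_div_cancel_left₀ _ hl.ne', sub_sub_cancel]
  have hcard : #(univ.filter (fun e : Sym2 V => ¬ e.IsDiag)) = (Fintype.card V).choose 2 := by
    rw [← Fintype.card_subtype]
    exact Sym2.card_subtype_not_diag
  have hn1 : (Fintype.card V : ℝ) - 1 ≠ 0 := by
    have : (2 : ℝ) ≤ Fintype.card V := by exact_mod_cast hn
    linarith
  rw [sum_congr rfl hedge, sum_const, nsmul_eq_mul, hcard, Nat.cast_choose_two]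
  field_simp
end

section
/- Let a: ℤ → ℝ_{>0} satisfy the T_1 equation of motion at every index n. If there exists k ∈ ℤ with a_k = a_{k+1}, then a is constant: a_n = a_k for all n ∈ ℤ. -/
/-!
Write `w x y = (x + y) / (x² + y²)` for the reciprocal edge lengths `x, y`, so that the equation
of motion at a vertex with neighbouring reciprocals `x, y, z` reads
`y (w x y² + w y z²) = w x y + w y z`. Since `w y y = 1 / y`, the term of an edge with equal
ends satisfies `y w² = w` on its own; the equation then forces the same for the other edge, and
`y w y z = 1` holds only for `z = y`. So two equal adjacent lengths propagate one step in either
direction, and by induction along `ℤ` to the whole sequence.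
-/

/-- The `T₁` equation of motion at index `n` for the bi-infinite sequence of edge
lengths `a : ℤ → ℝ`. -/
def T1EoM (a : ℤ → ℝ) (n : ℤ) : Prop :=
  (a n)⁻¹ * (((a (n - 1))⁻¹ + (a n)⁻¹) ^ 2 / (((a (n - 1))⁻¹) ^ 2 + ((a n)⁻¹) ^ 2) ^ 2
      + ((a n)⁻¹ + (a (n + 1))⁻¹) ^ 2 / (((a n)⁻¹) ^ 2 + ((a (n + 1))⁻¹) ^ 2) ^ 2)
    - ((a (n - 1))⁻¹ + (a n)⁻¹) / (((a (n - 1))⁻¹) ^ 2 + ((a n)⁻¹) ^ 2)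
    - ((a n)⁻¹ + (a (n + 1))⁻¹) / (((a n)⁻¹) ^ 2 + ((a (n + 1))⁻¹) ^ 2) = 0

theorem Int.forall_of_forall_succ_iff {p : ℤ → Prop} (h : ∀ m, p (m + 1) ↔ p m) {k : ℤ}
    (hk : p k) (n : ℤ) : p n :=
  Int.inductionOn' n k hk (fun m _ ih => (h m).2 ih)
    fun m _ ih => (h (m - 1)).1 (by rwa [sub_add_cancel])

theorem Int.eq_of_forall_succ_eq {α : Type*} {f : ℤ → α} (h : ∀ m, f (m + 1) = f m) (n k : ℤ) :
    f n = f k :=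
  Int.forall_of_forall_succ_iff (p := fun n => f n = f k) (fun m => by rw [h m]) rfl n

noncomputable def t1Weight (x y : ℝ) : ℝ := (x + y) / (x ^ 2 + y ^ 2)

theorem t1Weight_comm (x y : ℝ) : t1Weight x y = t1Weight y x := by
  rw [t1Weight, t1Weight, add_comm, add_comm (y ^ 2)]

theorem t1Weight_self {y : ℝ} (hy : y ≠ 0) : t1Weight y y = y⁻¹ := by
  rw [t1Weight]
  field_simp

theorem t1Weight_pos {y z : ℝ} (hy : 0 < y) (hz : 0 < z) : 0 < t1Weight y z := by
  unfold t1Weight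
  positivity

theorem eq_of_mul_t1Weight_eq_one {y z : ℝ} (hz : z ≠ 0) (h : y * t1Weight y z = 1) : z = y := by
  have hden : y ^ 2 + z ^ 2 ≠ 0 := by positivity
  rw [t1Weight, mul_div_assoc', div_eq_one_iff_eq hden] at h
  have hzz : z * (z - y) = 0 := by linear_combination -h
  exact sub_eq_zero.1 ((mul_eq_zero.1 hzz).resolve_left hz)

theorem T1EoM_iff (a : ℤ → ℝ) (n : ℤ) :
    T1EoM a n ↔
      (a n)⁻¹ * (t1Weight (a (n - 1))⁻¹ (a n)⁻¹ ^ 2 + t1Weight (a n)⁻¹ (a (n + 1))⁻¹ ^ 2) =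
        t1Weight (a (n - 1))⁻¹ (a n)⁻¹ + t1Weight (a n)⁻¹ (a (n + 1))⁻¹ := by
  rw [T1EoM, t1Weight, t1Weight, div_pow, div_pow, sub_sub, sub_eq_zero]

section Propagation

variable {x y z : ℝ}

theorem eq_right_of_t1_eom_of_eq_left (hy : 0 < y) (hz : 0 < z)
    (h : y * (t1Weight x y ^ 2 + t1Weight y z ^ 2) = t1Weight x y + t1Weight y z)
    (hxy : x = y) : z = y := by
  subst hxy
  have hself : x * t1Weight x x ^ 2 = t1Weight x x := by
    rw [t1Weight_self hy.ne']
    field_simp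
  have hw : x * t1Weight x z ^ 2 = t1Weight x z := by linear_combination h - hself
  refine eq_of_mul_t1Weight_eq_one hz.ne' (mul_left_cancel₀ (t1Weight_pos hy hz).ne' ?_)
  linear_combination hw

theorem eq_left_of_t1_eom_of_eq_right (hx : 0 < x) (hy : 0 < y)
    (h : y * (t1Weight x y ^ 2 + t1Weight y z ^ 2) = t1Weight x y + t1Weight y z)
    (hzy : z = y) : x = y := by
  refine eq_right_of_t1_eom_of_eq_left (x := z) hy hx ?_ hzy
  rw [t1Weight_comm z, t1Weight_comm y x]
  linear_combination h

end Propagation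

namespace T1EoM

variable {a : ℤ → ℝ} {n : ℤ}

theorem succ_eq_of_pred_eq (h : T1EoM a n) (hn : 0 < a n) (hsucc : 0 < a (n + 1))
    (heq : a (n - 1) = a n) : a (n + 1) = a n :=
  inv_injective <| eq_right_of_t1_eom_of_eq_left (inv_pos.2 hn) (inv_pos.2 hsucc)
    ((T1EoM_iff a n).1 h) (by rw [heq])

theorem pred_eq_of_succ_eq (h : T1EoM a n) (hpred : 0 < a (n - 1)) (hn : 0 < a n)
    (heq : a (n + 1) = a n) : a (n - 1) = a n :=
  inv_injective <| eq_left_of_t1_eom_of_eq_right (inv_pos.2 hpred) (inv_pos.2 hn)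
    ((T1EoM_iff a n).1 h) (by rw [heq])

end T1EoM

theorem t1_constant_of_two_equal (a : ℤ → ℝ) (hpos : ∀ n, 0 < a n)
    (heom : ∀ n, T1EoM a n) (k : ℤ) (hk : a k = a (k + 1)) :
    ∀ n, a n = a k := by
  have step : ∀ m, a (m + 1 + 1) = a (m + 1) ↔ a (m + 1) = a m := by
    intro m
    have h := heom (m + 1)
    constructor
    · intro hsucc
      simpa using (h.pred_eq_of_succ_eq (hpos _) (hpos _) hsucc).symm
    · intro hpred
      exact h.succ_eq_of_pred_eq (hpos _) (hpos _) (by simpa using hpred.symm)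
  have adjacent : ∀ m, a (m + 1) = a m := Int.forall_of_forall_succ_iff step hk.symm
  exact fun n => Int.eq_of_forall_succ_eq adjacent n k
end

section
/- Let a: ℤ → ℝ_{>0} satisfy the T_1 equation of motion at every index n, and suppose a is not constant. Then a is strictly monotonic: either a_n < a_{n+1} for all n ∈ ℤ, or a_n > a_{n+1} for all n ∈ ℤ. -/
/-- `T1EoM a n` is `T1Relation (a (n - 1))⁻¹ (a n)⁻¹ (a (n + 1))⁻¹` by definition. -/
def T1Relation (x y z : ℝ) : Prop :=
  y * ((x + y) ^ 2 / (x ^ 2 + y ^ 2) ^ 2 + (y + z) ^ 2 / (y ^ 2 + z ^ 2) ^ 2)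
    - (x + y) / (x ^ 2 + y ^ 2) - (y + z) / (y ^ 2 + z ^ 2) = 0

namespace T1Relation

variable {x y z : ℝ}

theorem mul_sub_eq (hy : 0 < y) (h : T1Relation x y z) :
    (x + y) * x * (y ^ 2 + z ^ 2) ^ 2 * (y - x) = (y + z) * z * (x ^ 2 + y ^ 2) ^ 2 * (z - y) := by
  have hxy : x ^ 2 + y ^ 2 ≠ 0 := by positivity
  have hyz : y ^ 2 + z ^ 2 ≠ 0 := by positivity
  unfold T1Relation at h
  field_simp at h
  refine mul_right_cancel₀ (mul_ne_zero hxy hyz) ?_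
  linear_combination (x ^ 2 + y ^ 2) * (y ^ 2 + z ^ 2) * h

theorem sign_sub_eq (hx : 0 < x) (hy : 0 < y) (hz : 0 < z) (h : T1Relation x y z) :
    SignType.sign (z - y) = SignType.sign (y - x) := by
  have hA : 0 < (x + y) * x * (y ^ 2 + z ^ 2) ^ 2 := by positivity
  have hB : 0 < (y + z) * z * (x ^ 2 + y ^ 2) ^ 2 := by positivity
  have key := congrArg SignType.sign (h.mul_sub_eq hy)
  rw [sign_mul, sign_pos hA, one_mul, sign_mul, sign_pos hB, one_mul] at key
  exact key.symm

end T1Relation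

theorem sign_inv_sub_inv {α : Type*} [Field α] [LinearOrder α] [IsStrictOrderedRing α] {x y : α}
    (hx : 0 < x) (hy : 0 < y) : SignType.sign (y⁻¹ - x⁻¹) = SignType.sign (x - y) := by
  rw [inv_sub_inv hy.ne' hx.ne', div_eq_mul_inv, sign_mul, sign_pos (inv_pos.2 (mul_pos hy hx)),
    mul_one]

theorem T1EoM.sign_sub_succ {a : ℤ → ℝ} {n : ℤ} (h : T1EoM a n) (hpos : ∀ n, 0 < a n) :
    SignType.sign (a n - a (n + 1)) = SignType.sign (a (n - 1) - a n) := by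
  have hinv := T1Relation.sign_sub_eq (inv_pos.2 (hpos (n - 1))) (inv_pos.2 (hpos n))
    (inv_pos.2 (hpos (n + 1))) h
  rwa [sign_inv_sub_inv (hpos n) (hpos (n + 1)), sign_inv_sub_inv (hpos (n - 1)) (hpos n)] at hinv

theorem t1_strictly_monotonic_of_nonconstant (a : ℤ → ℝ) (hpos : ∀ n, 0 < a n)
    (heom : ∀ n, T1EoM a n) (hnc : ¬ ∀ m n, a m = a n) :
    (∀ n, a n < a (n + 1)) ∨ (∀ n, a (n + 1) < a n) := by
  have hd : ∀ n, SignType.sign (a n - a (n + 1)) = SignType.sign (a 0 - a 1) := by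
    have hper : Function.Periodic (fun n : ℤ => SignType.sign (a n - a (n + 1))) 1 :=
      fun n => by simpa using (heom (n + 1)).sign_sub_succ hpos
    simpa using hper.int_mul_eq
  rcases h0 : SignType.sign (a 0 - a 1) with _ | _ | _
  · refine absurd (fun m n => ?_) hnc
    have hper : Function.Periodic a 1 := fun n =>
      (by simpa [h0, sign_eq_zero_iff, sub_eq_zero] using hd n : a n = a (n + 1)).symm
    simpa using (hper.int_mul_eq m).trans (hper.int_mul_eq n).symm
  · exact .inl fun n => by simpa [h0, sign_eq_neg_one_iff] using hd n
  · exact .inr fun n => by simpa [h0, sign_eq_one_iff] using hd n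
end

section
/- Let a: ℤ → ℝ_{>0} be strictly monotonic, define the ratios r_k = a_{k−1}/a_k for k ∈ ℤ, and suppose r_0 > 1. Then a satisfies the T_1 equation of motion at every index if and only if for every k ∈ ℤ, r_k = r_0 or r_k = (r_0 + 1)/(r_0 − 1). -/
noncomputable def t1Invariant (s : ℝ) : ℝ := s * (s ^ 2 - 1) / (1 + s ^ 2) ^ 2

lemma t1Invariant_eq_iff {s t : ℝ} (hs : 1 < s) (ht : 0 < t) :
    t1Invariant s = t1Invariant t ↔ t = s ∨ t = (s + 1) / (s - 1) := by
  have hs1 : s - 1 ≠ 0 := by linarith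
  have hcofactor : s ^ 2 * t ^ 2 + s ^ 2 * t + s * t ^ 2 + s + t - 1 ≠ 0 := by
    nlinarith [mul_pos ht ht]
  have hfactor : t1Invariant s = t1Invariant t ↔
      (s - t) * ((s - 1) * t - (s + 1)) *
        (s ^ 2 * t ^ 2 + s ^ 2 * t + s * t ^ 2 + s + t - 1) = 0 := by
    unfold t1Invariant
    rw [div_eq_div_iff (by positivity) (by positivity)]
    constructor <;> intro h <;> linear_combination (-1 : ℝ) * h
  rw [hfactor, mul_eq_zero, mul_eq_zero, sub_eq_zero, sub_eq_zero, eq_div_iff hs1]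
  simp only [hcofactor, or_false, eq_comm (a := s), mul_comm (s - 1)]

lemma T1EoM_iff_t1Invariant_eq {a : ℤ → ℝ} {n : ℤ}
    (h₀ : a (n - 1) ≠ 0) (h₁ : a n ≠ 0) (h₂ : a (n + 1) ≠ 0) :
    T1EoM a n ↔ t1Invariant (a (n - 1) / a n) = t1Invariant (a n / a (n + 1)) := by
  rw [T1EoM, ← sub_eq_zero (a := t1Invariant _),
    ← mul_eq_zero_iff_left (b := t1Invariant _ - t1Invariant _) h₁]
  congr! 1
  unfold t1Invariant
  field_simp
  ring

lemma Int.periodic_one_iff_forall_eq_apply_zero {α : Type*} (f : ℤ → α) :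
    Function.Periodic f 1 ↔ ∀ k, f k = f 0 :=
  ⟨fun h k => by simpa using Function.Periodic.int_mul_eq h k,
    fun h n => (h (n + 1)).trans (h n).symm⟩

theorem t1_monotonic_solution_iff_ratios_general (a : ℤ → ℝ) (hpos : ∀ n, 0 < a n)
    (r : ℤ → ℝ) (hr : ∀ k, r k = a (k - 1) / a k) (hr0 : 1 < r 0) :
    (∀ n, T1EoM a n) ↔ ∀ k, r k = r 0 ∨ r k = (r 0 + 1) / (r 0 - 1) := by
  have hr_pos : ∀ k, 0 < r k := fun k => hr k ▸ div_pos (hpos _) (hpos _)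
  have heom : ∀ n, T1EoM a n ↔ t1Invariant (r (n + 1)) = t1Invariant (r n) := fun n => by
    rw [hr, hr, add_sub_cancel_right, eq_comm]
    exact T1EoM_iff_t1Invariant_eq (hpos _).ne' (hpos _).ne' (hpos _).ne'
  calc (∀ n, T1EoM a n) ↔ Function.Periodic (fun k => t1Invariant (r k)) 1 := forall_congr' heom
    _ ↔ ∀ k, t1Invariant (r k) = t1Invariant (r 0) := Int.periodic_one_iff_forall_eq_apply_zero _
    _ ↔ _ := forall_congr' fun k => eq_comm.trans (t1Invariant_eq_iff hr0 (hr_pos k))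

theorem t1_monotonic_solution_iff_ratios (a : ℤ → ℝ) (hpos : ∀ n, 0 < a n)
    (hmono : (∀ n, a n < a (n + 1)) ∨ (∀ n, a (n + 1) < a n))
    (r : ℤ → ℝ) (hr : ∀ k, r k = a (k - 1) / a k) (hr0 : 1 < r 0) :
    (∀ n, T1EoM a n) ↔ ∀ k, r k = r 0 ∨ r k = (r 0 + 1) / (r 0 - 1) :=
  t1_monotonic_solution_iff_ratios_general a hpos r hr hr0
end

section
/- Let q be an odd positive integer, n = (q+1)/2, and let r > 0 and ℓ > 0. Set c_i = n·(1/ℓ + 1/(r·ℓ)), d_i = n·(1/ℓ² + 1/(r·ℓ)²), c_j = n·(1/ℓ + r/ℓ), d_j = n·(1/ℓ² + r²/ℓ²). Then (2/ℓ²)·(1/d_i + 1/d_j) − (1/ℓ)·(c_i/d_i + c_j/d_j) = (3−q)/(1+q) − 2r/(1+r²), and moreover c_i²/d_i = c_j²/d_j = (q+1)·(1+r)²/(2·(1+r²)). -/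
theorem geometric_halfhalf_curvature
    (q n : ℕ) (hq : Odd q) (hq0 : 0 < q) (hn : 2 * n = q + 1)
    (r l : ℝ) (hr : 0 < r) (hl : 0 < l)
    (ci di cj dj : ℝ)
    (hci : ci = (n : ℝ) * (1 / l + 1 / (r * l)))
    (hdi : di = (n : ℝ) * (1 / l ^ 2 + 1 / (r * l) ^ 2))
    (hcj : cj = (n : ℝ) * (1 / l + r / l))
    (hdj : dj = (n : ℝ) * (1 / l ^ 2 + r ^ 2 / l ^ 2)) :
    (2 / l ^ 2) * (1 / di + 1 / dj) - (1 / l) * (ci / di + cj / dj) =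
      (3 - (q : ℝ)) / (1 + (q : ℝ)) - 2 * r / (1 + r ^ 2) ∧
    ci ^ 2 / di = ((q : ℝ) + 1) * (1 + r) ^ 2 / (2 * (1 + r ^ 2)) ∧
    cj ^ 2 / dj = ((q : ℝ) + 1) * (1 + r) ^ 2 / (2 * (1 + r ^ 2)) := by
  have hn0 : 0 < n := by omega
  have hN : (0:ℝ) < (n:ℝ) := by exact_mod_cast hn0
  have hqN : (q:ℝ) = 2 * (n:ℝ) - 1 := by
    have : (2 * n : ℕ) = q + 1 := hn
    have := congrArg (Nat.cast : ℕ → ℝ) this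
    push_cast at this
    linarith
  have hl0 : l ≠ 0 := ne_of_gt hl
  have hr0 : r ≠ 0 := ne_of_gt hr
  have hrr : (0:ℝ) < 1 + r ^ 2 := by positivity
  have hrr0 : (1 + r ^ 2) ≠ 0 := ne_of_gt hrr
  have hq1 : (1 + (q:ℝ)) ≠ 0 := by rw [hqN]; nlinarith
  have hdi0 : di ≠ 0 := by
    rw [hdi]; positivity
  have hdj0 : dj ≠ 0 := by
    rw [hdj]; positivity
  subst hci hdi hcj hdj
  refine ⟨?_, ?_, ?_⟩
  · rw [hqN]
    field_simp
    ring
  · field_simp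
    rw [hqN]
    ring
  · field_simp
    rw [hqN]
    ring
end
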